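/- arXiv:1810.09307 — 10 statements merged into one kernel-verified Lean document; each statement's English description precedes it below -/
import Mathlib

section
/- Let n ≥ 2. The relative rank of the monoid wEnd P_n modulo its submonoid End P_n is equal to ⌊n/2⌋. -/
/-- `α` is a weak endomorphism of the path `P_n` (with vertices `0,…,n-1` standing for
`1,…,n`): `|iα - (i+1)α| ≤ 1` for all consecutive pairs of vertices. -/
def IsWEndo {n : ℕ} (f : Function.End (Fin n)) : Prop :=
  ∀ i : ℕ, ∀ h : i + 1 < n,
    |(((f ⟨i, by omega⟩ : Fin n) : ℕ) : ℤ) - (((f ⟨i + 1, h⟩ : Fin n) : ℕ) : ℤ)| ≤ 1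

/-- `α` is an endomorphism of the path `P_n`: `|iα - (i+1)α| = 1` for all consecutive
pairs of vertices. -/
def IsEndo {n : ℕ} (f : Function.End (Fin n)) : Prop :=
  ∀ i : ℕ, ∀ h : i + 1 < n,
    |(((f ⟨i, by omega⟩ : Fin n) : ℕ) : ℤ) - (((f ⟨i + 1, h⟩ : Fin n) : ℕ) : ℤ)| = 1


/-!
A weak endomorphism is a walk on `P_n` whose steps lie in `{-1, 0, 1}`; call the `0`-steps flat.
Removing a flat step `j` factors `α = β * σ_j`, where `σ_j` identifies `j` with `j + 1` and `β` has
fewer flat steps, so `End P_n` and the `σ_j` generate `wEnd P_n`. Conjugating by the reflection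
`i ↦ n - 1 - i` and composing with an endomorphism turns `σ_{n-2-j}` into `σ_j`, so the `⌊n/2⌋`
maps `σ_j` with `j < ⌊n/2⌋` suffice.

Conversely, write `σ_p` (rank `n - 1`, the single flat step `p`) as a product of elements of
`End P_n ∪ Y`. In a factorisation `a * b` of a map of rank `n - 1` with the single flat step `p`,
either `b` is such a map too, or `b` is a bijective endomorphism, hence the identity or the
reflection, and `a` has rank `n - 1` and the single flat step `p` or `n - 2 - p`. Induction along
the product yields `y ∈ Y` with the single flat step `p` or `n - 2 - p`, so `Y` meets each of the
`⌊n/2⌋` classes `{p, n - 2 - p}` with `p < ⌊n/2⌋`.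
-/

namespace PathGraphEnd

open Function Finset

variable {n : ℕ}

/-- `iα` as a natural number, for a vertex `i` given as a natural number (junk value `0` when
`i ≥ n`). -/
def valAt (f : Function.End (Fin n)) (i : ℕ) : ℕ :=
  if h : i < n then f ⟨i, h⟩ else 0

theorem valAt_of_lt (f : Function.End (Fin n)) {i : ℕ} (h : i < n) : valAt f i = f ⟨i, h⟩ :=
  dif_pos h

theorem valAt_of_le (f : Function.End (Fin n)) {i : ℕ} (h : n ≤ i) : valAt f i = 0 :=
  dif_neg (by omega)

theorem valAt_lt (f : Function.End (Fin n)) {i : ℕ} (h : i < n) : valAt f i < n := by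
  rw [valAt_of_lt f h]
  exact Fin.isLt _

theorem valAt_mul (f g : Function.End (Fin n)) {i : ℕ} (h : i < n) :
    valAt (f * g) i = valAt f (valAt g i) := by
  rw [valAt_of_lt _ h, valAt_of_lt g h, valAt_of_lt f (Fin.isLt _)]
  rfl

theorem valAt_one {i : ℕ} (h : i < n) : valAt (1 : Function.End (Fin n)) i = i := by
  rw [valAt_of_lt _ h]
  rfl

theorem ext_valAt {f g : Function.End (Fin n)} (h : ∀ i < n, valAt f i = valAt g i) : f = g :=
  funext fun x => Fin.ext <| by simpa only [valAt_of_lt _ x.isLt] using h x x.isLt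

theorem eq_of_valAt_eq {f : Function.End (Fin n)} (hf : Injective f) {a b : ℕ} (ha : a < n)
    (hb : b < n) (h : valAt f a = valAt f b) : a = b := by
  rw [valAt_of_lt f ha, valAt_of_lt f hb] at h
  exact Fin.mk.inj (hf (Fin.ext h))

theorem isWEndo_iff {f : Function.End (Fin n)} : IsWEndo f ↔
    ∀ i, i + 1 < n → valAt f i ≤ valAt f (i + 1) + 1 ∧ valAt f (i + 1) ≤ valAt f i + 1 := by
  refine forall_congr' fun i => forall_congr' fun hi => ?_
  rw [abs_sub_le_iff, valAt_of_lt f (by omega : i < n), valAt_of_lt f hi]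
  omega

theorem isEndo_iff {f : Function.End (Fin n)} : IsEndo f ↔
    ∀ i, i + 1 < n → valAt f i = valAt f (i + 1) + 1 ∨ valAt f (i + 1) = valAt f i + 1 := by
  refine forall_congr' fun i => forall_congr' fun hi => ?_
  rw [abs_eq zero_le_one, valAt_of_lt f (by omega : i < n), valAt_of_lt f hi]
  omega

theorem valAt_adj_of_isWEndo {f : Function.End (Fin n)} (hf : IsWEndo f) {a b : ℕ} (ha : a < n)
    (hb : b < n) (hab : a ≤ b + 1 ∧ b ≤ a + 1) :
    valAt f a ≤ valAt f b + 1 ∧ valAt f b ≤ valAt f a + 1 := by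
  rw [isWEndo_iff] at hf
  rcases (by omega : a = b ∨ a + 1 = b ∨ b + 1 = a) with rfl | rfl | rfl
  · omega
  · exact hf a hb
  · have := hf b ha
    omega

def wEnd (n : ℕ) : Submonoid (Function.End (Fin n)) where
  carrier := {f | IsWEndo f}
  one_mem' := isWEndo_iff.2 fun i hi => by
    rw [valAt_one (by omega), valAt_one hi]
    omega
  mul_mem' {f g} hf hg := isWEndo_iff.2 fun i hi => by
    rw [valAt_mul f g (by omega), valAt_mul f g hi]
    exact valAt_adj_of_isWEndo hf (valAt_lt g (by omega)) (valAt_lt g hi) (isWEndo_iff.1 hg i hi)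

def flats (f : Function.End (Fin n)) : Finset ℕ :=
  (range (n - 1)).filter fun i => valAt f i = valAt f (i + 1)

theorem mem_flats {f : Function.End (Fin n)} {i : ℕ} :
    i ∈ flats f ↔ i + 1 < n ∧ valAt f i = valAt f (i + 1) := by
  rw [flats, mem_filter, mem_range]
  omega

theorem isEndo_iff_isWEndo_and_flats_eq_empty {f : Function.End (Fin n)} :
    IsEndo f ↔ IsWEndo f ∧ flats f = ∅ := by
  simp only [isEndo_iff, isWEndo_iff, eq_empty_iff_forall_notMem, mem_flats, not_and]
  constructor
  · intro h
    exact ⟨fun i hi => by have := h i hi; omega, fun i hi => by have := h i hi; omega⟩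
  · rintro ⟨hw, hf⟩ i hi
    have := hw i hi
    have := hf i hi
    omega

theorem closure_isEndo_union_le_wEnd {Y : Set (Function.End (Fin n))} (hY : Y ⊆ wEnd n) :
    Submonoid.closure ({f | IsEndo f} ∪ Y) ≤ wEnd n :=
  Submonoid.closure_le.2 <|
    Set.union_subset (fun _ hf => (isEndo_iff_isWEndo_and_flats_eq_empty.1 hf).1) hY

theorem flats_one : flats (1 : Function.End (Fin n)) = ∅ := by
  refine eq_empty_of_forall_notMem fun i hi => ?_
  rw [mem_flats, valAt_one (by omega), valAt_one hi.1] at hi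
  omega

theorem flats_subset_flats_mul (f g : Function.End (Fin n)) : flats g ⊆ flats (f * g) := by
  intro i hi
  rw [mem_flats] at hi ⊢
  rw [valAt_mul f g (by omega), valAt_mul f g hi.1, hi.2]
  exact ⟨hi.1, rfl⟩

def rank (f : Function.End (Fin n)) : ℕ := (univ.image f).card

theorem image_mul (f g : Function.End (Fin n)) :
    univ.image (f * g) = (univ.image g).image f :=
  image_image.symm

theorem rank_le (f : Function.End (Fin n)) : rank f ≤ n :=
  card_image_le.trans_eq (card_fin n)

theorem rank_eq_iff_injective {f : Function.End (Fin n)} : rank f = n ↔ Injective f := by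
  have h := card_image_iff (s := univ) (f := f)
  simp only [card_univ, Fintype.card_fin, coe_univ] at h
  exact h.trans Set.injOn_univ

theorem rank_mul_le_left (f g : Function.End (Fin n)) : rank (f * g) ≤ rank f := by
  rw [rank, image_mul]
  exact card_le_card (image_subset_image (subset_univ _))

theorem rank_mul_le_right (f g : Function.End (Fin n)) : rank (f * g) ≤ rank g := by
  rw [rank, image_mul]
  exact card_image_le

theorem flats_mul_of_rank_mul_eq {f g : Function.End (Fin n)} (h : rank (f * g) = rank g) :
    flats (f * g) = flats g := by
  rw [rank, rank, image_mul] at h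
  have hinj : Set.InjOn f ↑(univ.image g) := card_image_iff.1 h
  have hmem (x : Fin n) : g x ∈ (↑(univ.image g) : Set (Fin n)) := mem_image_of_mem g (mem_univ x)
  refine Subset.antisymm (fun i hi => ?_) (flats_subset_flats_mul f g)
  rw [mem_flats] at hi ⊢
  refine ⟨hi.1, ?_⟩
  rw [valAt_of_lt _ (by omega), valAt_of_lt _ hi.1] at hi ⊢
  exact congrArg Fin.val (hinj (hmem _) (hmem _) (Fin.ext hi.2))

def reflect (n : ℕ) : Function.End (Fin n) := Fin.rev

theorem valAt_reflect {i : ℕ} (h : i < n) : valAt (reflect n) i = n - 1 - i := by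
  rw [valAt_of_lt _ h]
  show n - (i + 1) = n - 1 - i
  omega

theorem reflect_mul_reflect : reflect n * reflect n = 1 :=
  funext Fin.rev_rev

theorem isEndo_reflect : IsEndo (reflect n) :=
  isEndo_iff.2 fun i hi => by
    rw [valAt_reflect (by omega), valAt_reflect hi]
    omega

theorem isEndo_reflect_mul {f : Function.End (Fin n)} (hf : IsEndo f) :
    IsEndo (reflect n * f) :=
  isEndo_iff.2 fun i hi => by
    rw [valAt_mul _ _ (by omega), valAt_mul _ _ hi, valAt_reflect (valAt_lt f (by omega)),
      valAt_reflect (valAt_lt f hi)]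
    have := valAt_lt f (show i < n by omega)
    have := valAt_lt f hi
    have := isEndo_iff.1 hf i hi
    omega

theorem eq_one_of_isEndo_of_injective {f : Function.End (Fin n)} (hf : IsEndo f)
    (hinj : Injective f) (h01 : valAt f 0 < valAt f 1) : f = 1 := by
  have hn : 1 < n := by
    by_contra h
    rw [valAt_of_le f (by omega : n ≤ 1)] at h01
    omega
  have step (i : ℕ) (hi : i + 1 < n) : valAt f (i + 1) = valAt f i + 1 := by
    induction i with
    | zero => have := isEndo_iff.1 hf 0 hi; rw [zero_add] at this ⊢; omega
    | succ i ih =>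
      have := ih (by omega)
      rcases isEndo_iff.1 hf (i + 1) hi with hdown | hup
      · have := eq_of_valAt_eq hinj (by omega) hi (show valAt f i = valAt f (i + 1 + 1) by omega)
        omega
      · exact hup
  have linear (i : ℕ) (hi : i < n) : valAt f i = valAt f 0 + i := by
    induction i with
    | zero => rfl
    | succ i ih => rw [step i hi, ih (by omega)]; rfl
  have h0 : valAt f 0 = 0 := by
    have := linear (n - 1) (by omega)
    have := valAt_lt f (show n - 1 < n by omega)
    omega
  exact ext_valAt fun i hi => by rw [linear i hi, h0, valAt_one hi, zero_add]

theorem eq_one_or_reflect_of_isEndo_of_injective {f : Function.End (Fin n)} (hf : IsEndo f)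
    (hinj : Injective f) : f = 1 ∨ f = reflect n := by
  rcases le_or_gt n 1 with hn | hn
  · exact Or.inl <| ext_valAt fun i hi => by
      have := valAt_lt f hi
      rw [valAt_one hi]
      omega
  have h01 := isEndo_iff.1 hf 0 hn
  rw [zero_add] at h01
  rcases h01 with hdown | hup
  · have hrf : reflect n * f = 1 := by
      refine eq_one_of_isEndo_of_injective (isEndo_reflect_mul hf) (Fin.rev_injective.comp hinj) ?_
      rw [valAt_mul _ _ (by omega), valAt_mul _ _ hn, valAt_reflect (valAt_lt f (by omega)),
        valAt_reflect (valAt_lt f hn)]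
      have := valAt_lt f (show 0 < n by omega)
      omega
    right
    calc f = reflect n * (reflect n * f) := by rw [← mul_assoc, reflect_mul_reflect, one_mul]
      _ = reflect n := by rw [hrf, mul_one]
  · exact Or.inl (eq_one_of_isEndo_of_injective hf hinj (by omega))

theorem flats_mul_reflect (f : Function.End (Fin n)) :
    flats (f * reflect n) = (flats f).image (fun i => n - 2 - i) := by
  ext i
  simp only [mem_image, mem_flats]
  constructor
  · rintro ⟨hi, hflat⟩
    rw [valAt_mul _ _ (by omega), valAt_mul _ _ hi, valAt_reflect (by omega),
      valAt_reflect hi] at hflat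
    refine ⟨n - 2 - i, ⟨by omega, ?_⟩, by omega⟩
    rw [show n - 2 - i + 1 = n - 1 - i by omega, show n - 2 - i = n - 1 - (i + 1) by omega]
    exact hflat.symm
  · rintro ⟨k, ⟨hk, hflat⟩, rfl⟩
    refine ⟨by omega, ?_⟩
    rw [valAt_mul _ _ (by omega), valAt_mul _ _ (by omega), valAt_reflect (by omega),
      valAt_reflect (by omega), show n - 1 - (n - 2 - k) = k + 1 by omega,
      show n - 1 - (n - 2 - k + 1) = k by omega]
    exact hflat.symm

def collapse (n j : ℕ) : Function.End (Fin n) := fun x =>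
  if x.val ≤ j then x else ⟨x - 1, by omega⟩

theorem collapse_val (j : ℕ) (x : Fin n) :
    (collapse n j x : ℕ) = if x.val ≤ j then x.val else x.val - 1 := by
  rw [collapse]
  split_ifs <;> rfl

theorem valAt_collapse {j i : ℕ} (h : i < n) :
    valAt (collapse n j) i = if i ≤ j then i else i - 1 := by
  rw [valAt_of_lt _ h, collapse_val]

theorem collapse_mem_wEnd (j : ℕ) : collapse n j ∈ wEnd n :=
  isWEndo_iff.2 fun i hi => by
    rw [valAt_collapse (by omega), valAt_collapse hi]
    split_ifs <;> omega

theorem flats_collapse {j : ℕ} (hj : j + 1 < n) : flats (collapse n j) = {j} := by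
  ext i
  rw [mem_flats, mem_singleton]
  constructor
  · rintro ⟨hi, hflat⟩
    rw [valAt_collapse (by omega), valAt_collapse hi] at hflat
    split_ifs at hflat <;> omega
  · rintro rfl
    rw [valAt_collapse (by omega), valAt_collapse hj]
    simp [hj]

theorem pred_le_rank_collapse {j : ℕ} (hj : j + 1 < n) : n - 1 ≤ rank (collapse n j) := by
  have hinj : Set.InjOn (collapse n j) ↑(univ.erase (⟨j + 1, hj⟩ : Fin n)) := by
    intro x hx y hy hxy
    simp only [coe_erase, coe_univ, Set.mem_sdiff, Set.mem_univ, Set.mem_singleton_iff,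
      true_and, ← Fin.val_ne_iff] at hx hy
    have := congrArg Fin.val hxy
    rw [collapse_val, collapse_val] at this
    split_ifs at this <;> omega
  calc n - 1 = (univ.erase (⟨j + 1, hj⟩ : Fin n)).card := by simp
    _ = ((univ.erase ⟨j + 1, hj⟩).image (collapse n j)).card := (card_image_of_injOn hinj).symm
    _ ≤ rank (collapse n j) := card_le_card (image_subset_image (erase_subset _ _))

theorem collapse_injOn : Set.InjOn (collapse n) {j | j + 1 < n} := by
  intro a ha b hb hab
  have h := flats_collapse (n := n) ha
  rwa [hab, flats_collapse hb, singleton_inj, eq_comm] at h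

/-- The `min` only matters for `n = 1`, where there is no vertex `1`. -/
def shiftDown (n : ℕ) : Function.End (Fin n) := fun x =>
  if x.val = 0 then ⟨min 1 (n - 1), by have := x.isLt; omega⟩ else ⟨x - 1, by omega⟩

theorem valAt_shiftDown {i : ℕ} (h : i < n) :
    valAt (shiftDown n) i = if i = 0 then min 1 (n - 1) else i - 1 := by
  rw [valAt_of_lt _ h, shiftDown]
  split_ifs <;> rfl

theorem isEndo_shiftDown : IsEndo (shiftDown n) :=
  isEndo_iff.2 fun i hi => by
    rw [valAt_shiftDown (by omega), valAt_shiftDown hi, if_neg (Nat.succ_ne_zero i)]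
    split_ifs <;> omega

/-- Conjugating by the reflection turns `collapse n (n - 2 - j)` into the map identifying `j` with
`j + 1` and shifting `0, …, j` up by one; `shiftDown` then undoes the shift. -/
theorem collapse_eq_shiftDown_mul {j : ℕ} (hj : j + 1 < n) :
    collapse n j = shiftDown n * (reflect n * collapse n (n - 2 - j) * reflect n) := by
  refine ext_valAt fun i hi => ?_
  have hr : n - 1 - i < n := by omega
  have hcr : valAt (collapse n (n - 2 - j)) (n - 1 - i) < n := valAt_lt _ hr
  rw [valAt_mul _ _ hi, valAt_mul _ _ hi, valAt_mul _ _ (valAt_lt _ hi), valAt_reflect hi,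
    valAt_reflect hcr, valAt_collapse hr, valAt_collapse hi]
  split_ifs <;> rw [valAt_shiftDown (by omega)] <;> split_ifs <;> omega

/-- The last value is moved to a neighbour of `(n-1)α` so that no new flat step appears. -/
def unfold (f : Function.End (Fin n)) (j : ℕ) : Function.End (Fin n) := fun x =>
  if x.val ≤ j then f x else if h : x.val + 1 < n then f ⟨x + 1, h⟩ else shiftDown n (f x)

theorem valAt_unfold (f : Function.End (Fin n)) (j : ℕ) {i : ℕ} (h : i < n) :
    valAt (unfold f j) i = if i ≤ j then valAt f i else if i + 1 < n then valAt f (i + 1)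
      else valAt (shiftDown n) (valAt f i) := by
  rw [valAt_of_lt _ h, unfold]
  split_ifs with h1 h2
  · rw [valAt_of_lt f h]
  · rw [valAt_of_lt f h2]
  · rw [valAt_of_lt f h, valAt_of_lt _ (Fin.isLt _)]

theorem unfold_mul_collapse {f : Function.End (Fin n)} {j : ℕ} (hj : j ∈ flats f) :
    unfold f j * collapse n j = f := by
  rw [mem_flats] at hj
  refine ext_valAt fun i hi => ?_
  rw [valAt_mul _ _ hi, valAt_collapse hi]
  split_ifs with hij
  · rw [valAt_unfold f j hi, if_pos hij]
  · rw [valAt_unfold f j (by omega)]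
    split_ifs with h1 h2
    · rw [show i = j + 1 by omega, ← hj.2, show j + 1 - 1 = j by omega]
    · rw [Nat.sub_add_cancel (by omega)]
    · omega

theorem unfold_step {f : Function.End (Fin n)} {j i : ℕ} (hj : j ∈ flats f) (hi : i + 1 < n) :
    (i < j ∧ valAt (unfold f j) i = valAt f i ∧ valAt (unfold f j) (i + 1) = valAt f (i + 1)) ∨
    (j ≤ i ∧ i + 2 < n ∧ valAt (unfold f j) i = valAt f (i + 1) ∧
      valAt (unfold f j) (i + 1) = valAt f (i + 1 + 1)) ∨
    (i + 2 = n ∧ (valAt (unfold f j) (i + 1) = valAt (unfold f j) i + 1 ∨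
      valAt (unfold f j) i = valAt (unfold f j) (i + 1) + 1)) := by
  rw [mem_flats] at hj
  have hlast := valAt_lt f hi
  rw [valAt_unfold f j (by omega), valAt_unfold f j hi, valAt_shiftDown hlast]
  obtain hij | rfl | hij := lt_trichotomy i j <;> split_ifs <;> omega

theorem unfold_mem_wEnd {f : Function.End (Fin n)} (hf : f ∈ wEnd n) {j : ℕ}
    (hj : j ∈ flats f) : unfold f j ∈ wEnd n :=
  isWEndo_iff.2 fun i hi => by
    rcases unfold_step hj hi with ⟨-, h1, h2⟩ | ⟨-, h3, h1, h2⟩ | ⟨-, h⟩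
    · rw [h1, h2]
      exact isWEndo_iff.1 hf i hi
    · rw [h1, h2]
      exact isWEndo_iff.1 hf (i + 1) (by omega)
    · omega

theorem card_flats_unfold_lt {f : Function.End (Fin n)} {j : ℕ} (hj : j ∈ flats f) :
    (flats (unfold f j)).card < (flats f).card := by
  have hsub :
      flats (unfold f j) ⊆ ((flats f).erase j).image fun k => if k < j then k else k - 1 := by
    intro i hi
    rw [mem_flats] at hi
    rw [mem_image]
    rcases unfold_step hj hi.1 with ⟨hij, h1, h2⟩ | ⟨hij, h3, h1, h2⟩ | ⟨-, h⟩
    · exact ⟨i, mem_erase.2 ⟨by omega, mem_flats.2 ⟨hi.1, by omega⟩⟩, if_pos hij⟩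
    · refine ⟨i + 1, mem_erase.2 ⟨by omega, mem_flats.2 ⟨h3, by omega⟩⟩, ?_⟩
      rw [if_neg (by omega), Nat.add_sub_cancel]
    · omega
  calc (flats (unfold f j)).card ≤ ((flats f).erase j).card :=
        (card_le_card hsub).trans card_image_le
    _ < (flats f).card := card_erase_lt_of_mem hj

def collapseGens (n : ℕ) : Set (Function.End (Fin n)) := collapse n '' Set.Iio (n / 2)

theorem ncard_collapseGens : (collapseGens n).ncard = n / 2 := by
  have hinj : Set.InjOn (collapse n) (Set.Iio (n / 2)) :=
    collapse_injOn.mono fun j (hj : j < n / 2) => show j + 1 < n by omega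
  rw [collapseGens, hinj.ncard_image, Set.ncard_Iio_nat]

theorem collapseGens_subset_wEnd : collapseGens n ⊆ wEnd n := by
  rintro _ ⟨j, -, rfl⟩
  exact collapse_mem_wEnd j

theorem collapse_mem_closure {j : ℕ} (hj : j + 1 < n) :
    collapse n j ∈ Submonoid.closure ({f | IsEndo f} ∪ collapseGens n) := by
  have hgen {f} (hf : f ∈ {f | IsEndo f} ∪ collapseGens n) := Submonoid.subset_closure hf
  by_cases h : j < n / 2
  · exact hgen (Or.inr ⟨j, h, rfl⟩)
  rw [collapse_eq_shiftDown_mul hj]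
  refine mul_mem (hgen (Or.inl isEndo_shiftDown)) (mul_mem (mul_mem ?_ ?_) ?_)
  · exact hgen (Or.inl isEndo_reflect)
  · exact hgen (Or.inr ⟨n - 2 - j, show n - 2 - j < n / 2 by omega, rfl⟩)
  · exact hgen (Or.inl isEndo_reflect)

theorem mem_closure_of_mem_wEnd {f : Function.End (Fin n)} (hf : f ∈ wEnd n) :
    f ∈ Submonoid.closure ({f | IsEndo f} ∪ collapseGens n) := by
  induction hc : (flats f).card using Nat.strong_induction_on generalizing f with
  | _ m ih =>
  obtain hempty | ⟨j, hj⟩ := (flats f).eq_empty_or_nonempty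
  · exact Submonoid.subset_closure (Or.inl (isEndo_iff_isWEndo_and_flats_eq_empty.2 ⟨hf, hempty⟩))
  rw [← unfold_mul_collapse hj]
  exact mul_mem (ih _ (hc ▸ card_flats_unfold_lt hj) (unfold_mem_wEnd hf hj) rfl)
    (collapse_mem_closure (mem_flats.1 hj).1)

theorem closure_isEndo_union_collapseGens :
    Submonoid.closure ({f | IsEndo f} ∪ collapseGens n) = wEnd n :=
  le_antisymm (closure_isEndo_union_le_wEnd collapseGens_subset_wEnd)
    fun _ hf => mem_closure_of_mem_wEnd hf

theorem flats_singleton_cases_of_mul {a b : Function.End (Fin n)} (hb : b ∈ wEnd n) {p : ℕ}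
    (hab : flats (a * b) = {p}) (hr : n - 1 ≤ rank (a * b)) :
    (flats b = {p} ∧ n - 1 ≤ rank b) ∨ (flats a = {p} ∧ n - 1 ≤ rank a) ∨
      (flats a = {n - 2 - p} ∧ n - 1 ≤ rank a) := by
  have hsub : flats b ⊆ {p} := hab ▸ flats_subset_flats_mul a b
  by_cases hpb : p ∈ flats b
  · exact Or.inl ⟨Subset.antisymm hsub (singleton_subset_iff.2 hpb),
      hr.trans (rank_mul_le_right a b)⟩
  have hbe : IsEndo b := isEndo_iff_isWEndo_and_flats_eq_empty.2
    ⟨hb, (subset_singleton_iff.1 hsub).resolve_right fun h => hpb (h ▸ mem_singleton_self p)⟩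
  have hinj : Injective b := by
    refine rank_eq_iff_injective.1 (le_antisymm (rank_le b) ?_)
    by_contra hlt
    have heq : rank (a * b) = rank b := le_antisymm (rank_mul_le_right a b) (by omega)
    exact hpb (flats_mul_of_rank_mul_eq heq ▸ hab ▸ mem_singleton_self p)
  rcases eq_one_or_reflect_of_isEndo_of_injective hbe hinj with rfl | rfl
  · rw [mul_one] at hab hr
    exact Or.inr (Or.inl ⟨hab, hr⟩)
  · have ha : a = a * reflect n * reflect n := by rw [mul_assoc, reflect_mul_reflect, mul_one]
    refine Or.inr (Or.inr ⟨?_, hr.trans (rank_mul_le_left _ _)⟩)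
    rw [ha, flats_mul_reflect, hab, image_singleton]

theorem exists_flats_eq_of_mem_closure {Y : Set (Function.End (Fin n))} (hY : Y ⊆ wEnd n)
    {f : Function.End (Fin n)} (hf : f ∈ Submonoid.closure ({f | IsEndo f} ∪ Y)) {p : ℕ}
    (hfp : flats f = {p}) (hr : n - 1 ≤ rank f) :
    ∃ y ∈ Y, flats y = {p} ∨ flats y = {n - 2 - p} := by
  induction hf using Submonoid.closure_induction generalizing p with
  | mem f hf =>
    rcases hf with hf | hf
    · rw [(isEndo_iff_isWEndo_and_flats_eq_empty.1 hf).2] at hfp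
      exact absurd hfp.symm (singleton_ne_empty p)
    · exact ⟨f, hf, Or.inl hfp⟩
  | one =>
    rw [flats_one] at hfp
    exact absurd hfp.symm (singleton_ne_empty p)
  | mul a b _ hb iha ihb =>
    have hbw : b ∈ wEnd n := closure_isEndo_union_le_wEnd hY hb
    have hp : p + 1 < n := (mem_flats.1 (hfp ▸ mem_singleton_self p)).1
    rcases flats_singleton_cases_of_mul hbw hfp hr with ⟨h1, h2⟩ | ⟨h1, h2⟩ | ⟨h1, h2⟩
    · exact ihb h1 h2
    · exact iha h1 h2
    · obtain ⟨y, hy, h⟩ := iha h1 h2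
      exact ⟨y, hy, by rwa [show n - 2 - (n - 2 - p) = p by omega, or_comm] at h⟩

theorem half_le_ncard_of_wEnd_le_closure {Y : Set (Function.End (Fin n))} (hY : Y ⊆ wEnd n)
    (hcl : wEnd n ≤ Submonoid.closure ({f | IsEndo f} ∪ Y)) : n / 2 ≤ Y.ncard := by
  have key (p : ℕ) (hp : p < n / 2) : ∃ y ∈ Y, flats y = {p} ∨ flats y = {n - 2 - p} :=
    exists_flats_eq_of_mem_closure hY (hcl (collapse_mem_wEnd p)) (flats_collapse (by omega))
      (pred_le_rank_collapse (by omega))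
  choose! y hyY hy using key
  have : Finite (Function.End (Fin n)) := inferInstanceAs (Finite (Fin n → Fin n))
  rw [← Set.ncard_Iio_nat (n / 2)]
  refine Set.ncard_le_ncard_of_injOn y hyY (fun p hp q hq hpq => ?_)
  have hp' := hy p hp
  have hq' := hy q hq
  rw [hpq] at hp'
  simp only [Set.mem_Iio] at hp hq
  rcases hp' with h | h <;> rcases hq' with h' | h' <;> rw [h, singleton_inj] at h' <;> omega

end PathGraphEnd

theorem relrank_wEnd_mod_End_path_general (n : ℕ) :
    IsLeast {k : ℕ | ∃ Y : Set (Function.End (Fin n)),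
        Y ⊆ {f | IsWEndo f} ∧
        (Submonoid.closure ({f | IsEndo f} ∪ Y) : Set (Function.End (Fin n)))
          = {f | IsWEndo f} ∧
        Y.ncard = k}
      (n / 2) := by
  refine ⟨⟨PathGraphEnd.collapseGens n, PathGraphEnd.collapseGens_subset_wEnd, ?_,
    PathGraphEnd.ncard_collapseGens⟩, ?_⟩
  · exact congrArg SetLike.coe PathGraphEnd.closure_isEndo_union_collapseGens
  · rintro k ⟨Y, hY, hcl, rfl⟩
    exact PathGraphEnd.half_le_ncard_of_wEnd_le_closure hY hcl.ge

/-- The relative rank of `wEnd P_n` modulo `End P_n` is `⌊n/2⌋`: the least cardinality of a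
set `Y ⊆ wEnd P_n` such that `End P_n ∪ Y` generates the monoid `wEnd P_n`. -/
theorem relrank_wEnd_mod_End_path (n : ℕ) (hn : 2 ≤ n) :
    IsLeast {k : ℕ | ∃ Y : Set (Function.End (Fin n)),
        Y ⊆ {f | IsWEndo f} ∧
        (Submonoid.closure ({f | IsEndo f} ∪ Y) : Set (Function.End (Fin n)))
          = {f | IsWEndo f} ∧
        Y.ncard = k}
      (n / 2) :=
  relrank_wEnd_mod_End_path_general n
end

section
/- For every n ≥ 1 with n ≠ 3, the monoid of strong endomorphisms of the path P_n coincides with the automorphism group of P_n, i.e. sEnd P_n = Aut P_n. -/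
/-- `{u,v}` is an edge of the path `P_n` (vertices `0,…,n-1` standing for `1,…,n`). -/
def pathAdj {n : ℕ} (u v : Fin n) : Prop := |((u : ℕ) : ℤ) - ((v : ℕ) : ℤ)| = 1

/-- `α` is a strong endomorphism of the path `P_n`. -/
def IsSEndo {n : ℕ} (f : Function.End (Fin n)) : Prop :=
  ∀ u v : Fin n, pathAdj u v ↔ pathAdj (f u) (f v)

/-! A strong endomorphism `f` with `f a = f b` forces `a` and `b` to have the same
neighbourhood. In `P_n` two distinct vertices share their neighbourhood only for the two
ends of `P_3`, so for `n ≠ 3` every strong endomorphism is injective, hence bijective. -/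

def PointDetermining {α : Type*} (r : α → α → Prop) : Prop :=
  ∀ a b, (∀ z, r z a ↔ r z b) → a = b

theorem PointDetermining.injective {α : Type*} {r : α → α → Prop} (hr : PointDetermining r)
    {f : α → α} (hf : ∀ u v, r u v ↔ r (f u) (f v)) : Function.Injective f := by
  intro a b hab
  exact hr a b fun z => by rw [hf z a, hf z b, hab]

theorem pathAdj_iff {n : ℕ} (u v : Fin n) :
    pathAdj u v ↔ (u : ℕ) + 1 = v ∨ (v : ℕ) + 1 = u := by
  simp only [pathAdj, abs_eq zero_le_one]
  omega

theorem pointDetermining_pathAdj {n : ℕ} (hn3 : n ≠ 3) : PointDetermining (@pathAdj n) := by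
  intro a b h
  wlog hab : (a : ℕ) < b generalizing a b
  · rcases (not_lt.mp hab).lt_or_eq with hba | hba
    · exact (this b a (fun z => (h z).symm) hba).symm
    · exact Fin.ext hba.symm
  exfalso
  simp only [pathAdj_iff] at h
  have hb : (b : ℕ) < n := b.2
  have hb2 : (b : ℕ) = a + 2 := by
    have := (h ⟨b - 1, by omega⟩).mpr (by simp only; omega)
    simp only at this
    omega
  have ha0 : (a : ℕ) = 0 := by
    by_contra ha0
    have := (h ⟨a - 1, by omega⟩).mp (by simp only; omega)
    simp only at this
    omega
  have hbn : (b : ℕ) + 1 = n := by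
    by_contra hbn
    have := (h ⟨b + 1, by omega⟩).mpr (Or.inr rfl)
    simp only at this
    omega
  omega

theorem sEnd_path_eq_aut_general (n : ℕ) (hn3 : n ≠ 3) :
    {f : Function.End (Fin n) | IsSEndo f}
      = {f : Function.End (Fin n) | Function.Bijective f ∧ IsSEndo f} := by
  ext f
  refine ⟨fun hf => ⟨?_, hf⟩, And.right⟩
  exact Finite.injective_iff_bijective.mp ((pointDetermining_pathAdj hn3).injective hf)

/-- For `n ≠ 3`, the strong endomorphisms of `P_n` are exactly the automorphisms of
`P_n` (the bijective strong endomorphisms). -/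
theorem sEnd_path_eq_aut (n : ℕ) (hn : 1 ≤ n) (hn3 : n ≠ 3) :
    {f : Function.End (Fin n) | IsSEndo f}
      = {f : Function.End (Fin n) | Function.Bijective f ∧ IsSEndo f} :=
  sEnd_path_eq_aut_general n hn3
end

section
/- Let n ≥ 2. Then |wEnd P_n| = 3^{n−2}(3n−2) − Σ_{r=1}^{n−2} 3^{n−r−2} b(r), where b(r) = 2 Σ_{i=1}^{n−1} a(r,i) and the integers a(r,i), for 1 ≤ r ≤ n−2 and 1 ≤ i ≤ n−1, are defined recursively by: a(1,1) = a(1,2) = 1; a(1,p) = 0 for 3 ≤ p ≤ n−1; for 2 ≤ k ≤ n−2, a(k,1) = a(k−1,1) + a(k−1,2) and a(k,p) = a(k−1,p−1) + a(k−1,p) + a(k−1,p+1) for 2 ≤ p ≤ n−2; a(k,n−1) = 0 for 2 ≤ k ≤ n−3; and a(n−2,n−1) = 1. -/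
/-- The recursively defined family `a(r,i)` (for the path with `n` vertices):
`a(1,1) = a(1,2) = 1`; `a(1,p) = 0` for `3 ≤ p ≤ n-1`; for `2 ≤ k ≤ n-2`,
`a(k,1) = a(k-1,1) + a(k-1,2)` and `a(k,p) = a(k-1,p-1) + a(k-1,p) + a(k-1,p+1)` for
`2 ≤ p ≤ n-2`; `a(k,n-1) = 0` for `2 ≤ k ≤ n-3`; and `a(n-2,n-1) = 1`. -/
def aF (n : ℕ) : ℕ → ℕ → ℕ
  | 0, _ => 0
  | 1, p => if p = 1 ∨ p = 2 then 1 else 0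
  | k + 2, p =>
    if p = n - 1 then (if k + 2 = n - 2 then 1 else 0)
    else if p = 1 then aF n (k + 1) 1 + aF n (k + 1) 2
    else aF n (k + 1) (p - 1) + aF n (k + 1) p + aF n (k + 1) (p + 1)

/-- `b(r) = 2 ∑_{i=1}^{n-1} a(r,i)`. -/
def bF (n r : ℕ) : ℕ := 2 * ∑ i ∈ Finset.Icc 1 (n - 1), aF n r i

/-!
A weak endomorphism of `P_n` is the same as a walk `1α, 2α, …, nα` of length `n - 1` in the
path with a loop at every vertex, so `|wEnd P_n|` is the sum `W(n-1)` of all entries of `A^(n-1)`,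
where `A` is the tridiagonal `0/1` matrix of that looped path. Every row of `A` sums to `3` except
the two end rows, which sum to `2`; hence `W(m+1) = 3 W(m) - c₁(m) - cₙ(m)`, where `cᵥ(m)` is the
`v`-th column sum of `A^m`. Since `A` is symmetric and invariant under the reflection `i ↦ n+1-i`,
both column sums equal the number `e(m)` of walks of length `m` starting at vertex `1`. Unrolling
`W(m+1) = 3 W(m) - 2 e(m)` from `W(0) = n` gives the formula, because `e(0) = 1` and `a(r,i)`
counts the walks of length `r` from `1` to `i`, so that `b(r) = 2 e(r)`.
-/

open Finset Matrix

section RelChain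

variable {V : Type*} (R : V → V → Prop)

def IsRelChain {m : ℕ} (f : Fin (m + 1) → V) : Prop :=
  ∀ i : Fin m, R (f i.castSucc) (f i.succ)

theorem isRelChain_snoc {m : ℕ} (g : Fin (m + 1) → V) (x : V) :
    IsRelChain R (Fin.snoc g x : Fin (m + 2) → V) ↔
      IsRelChain R g ∧ R (g (Fin.last m)) x := by
  simp [IsRelChain, Fin.forall_fin_succ', -Fin.castSucc_succ, Fin.succ_castSucc]

variable [DecidableRel R]

instance {m : ℕ} : DecidablePred (IsRelChain R (m := m)) :=
  fun _ => inferInstanceAs (Decidable (∀ _, _))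

def relMatrix (S : Type*) [Zero S] [One S] : Matrix V V S :=
  Matrix.of fun a b => if R a b then 1 else 0

theorem isSymm_relMatrix (S : Type*) [Zero S] [One S] [Std.Symm R] : (relMatrix R S).IsSymm := by
  ext a b
  simp [relMatrix, Std.Symm.iff a b]

variable [Fintype V] [DecidableEq V]

def relChainsBetween (m : ℕ) (j k : V) : Finset (Fin (m + 1) → V) :=
  {f | IsRelChain R f ∧ f 0 = j ∧ f (Fin.last m) = k}

theorem card_relChainsBetween_zero (j k : V) :
    #(relChainsBetween R 0 j k) = if j = k then 1 else 0 := by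
  rw [relChainsBetween, card_filter, ← (Equiv.funUnique (Fin 1) V).symm.sum_comp]
  simp only [IsRelChain, Equiv.funUnique_symm_apply, uniqueElim_const, IsEmpty.forall_iff,
    Fin.last, Fin.zero_eta, true_and, sum_boole, Nat.cast_id]
  split_ifs with h <;> simp [h, filter_eq']

theorem card_relChainsBetween_succ (m : ℕ) (j k : V) :
    #(relChainsBetween R (m + 1) j k) =
      ∑ l, if R l k then #(relChainsBetween R m j l) else 0 := by
  simp only [relChainsBetween, card_filter]
  rw [← (Fin.snocEquiv fun _ => V).sum_comp, Fintype.sum_prod_type, sum_comm]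
  simp only [Fin.snocEquiv, Equiv.coe_fn_mk, isRelChain_snoc, Fin.snoc_last, ← Fin.castSucc_zero,
    Fin.snoc_castSucc]
  simp_rw [← sum_filter (fun l => R l k), sum_comm (s := filter _ _)]
  refine sum_congr rfl fun g _ => ?_
  rw [Fintype.sum_eq_single k (by intros; simp [*])]
  simp only [ite_and]
  split_ifs <;> simp_all

theorem card_relChainsBetween {S : Type*} [Semiring S] (m : ℕ) (j k : V) :
    (#(relChainsBetween R m j k) : S) = (relMatrix R S ^ m) j k := by
  induction m generalizing k with
  | zero => simp [card_relChainsBetween_zero, one_apply]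
  | succ m ih =>
    simp [card_relChainsBetween_succ, pow_succ, mul_apply, ih, relMatrix]

def relChains (m : ℕ) : Finset (Fin (m + 1) → V) := {f | IsRelChain R f}

theorem card_relChains {S : Type*} [Semiring S] (m : ℕ) :
    (#(relChains R m) : S) = ∑ j, ∑ k, (relMatrix R S ^ m) j k := by
  simp only [← card_relChainsBetween]
  rw [card_eq_sum_card_fiberwise (f := fun f => (f 0, f (Fin.last m))) (t := univ) (by simp),
    Fintype.sum_prod_type]
  push_cast
  simp [relChains, relChainsBetween, filter_filter, Prod.ext_iff]

theorem relMatrix_pow_apply_equiv {S : Type*} [Semiring S] (e : V ≃ V)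
    (he : ∀ a b, R (e a) (e b) ↔ R a b) (m : ℕ) (a b : V) :
    (relMatrix R S ^ m) (e a) (e b) = (relMatrix R S ^ m) a b := by
  have hA : reindex e e (relMatrix R S) = relMatrix R S := by
    ext a b
    have := he (e.symm a) (e.symm b)
    simp_all [relMatrix]
  have hpow : reindex e e (relMatrix R S ^ m) = relMatrix R S ^ m := by
    rw [← coe_reindexRingEquiv, map_pow, coe_reindexRingEquiv, hA]
  conv_lhs => rw [← hpow]
  simp

end RelChain

theorem Matrix.sum_sum_pow_succ {V S : Type*} [Fintype V] [DecidableEq V] [Semiring S]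
    (M : Matrix V V S) (m : ℕ) :
    ∑ j, ∑ k, (M ^ (m + 1)) j k = ∑ j, ∑ l, (M ^ m) j l * ∑ k, M l k := by
  simp only [pow_succ, mul_apply, mul_sum]
  exact sum_congr rfl fun j _ => sum_comm

theorem eq_pow_mul_add_sum_of_succ {R : Type*} [CommSemiring R] {u v : ℕ → R} {c : R}
    (h : ∀ m, u (m + 1) = c * u m + v m) (m : ℕ) :
    u m = c ^ m * u 0 + ∑ r ∈ range m, c ^ (m - 1 - r) * v r := by
  induction m with
  | zero => simp
  | succ m ih =>
    rw [h, ih, sum_range_succ, mul_add, mul_sum, Nat.add_sub_cancel, Nat.sub_self, pow_zero,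
      one_mul]
    have hshift : ∀ r ∈ range m, c * (c ^ (m - 1 - r) * v r) = c ^ (m - r) * v r := by
      intro r hr
      rw [mem_range] at hr
      rw [← mul_assoc, ← pow_succ', show m - 1 - r + 1 = m - r by omega]
    rw [sum_congr rfl hshift]
    ring

def PathAdj (n : ℕ) (a b : Fin n) : Prop := (a : ℕ) ≤ b + 1 ∧ (b : ℕ) ≤ a + 1

instance (n : ℕ) : DecidableRel (PathAdj n) := fun _ _ => inferInstanceAs (Decidable (_ ∧ _))

instance (n : ℕ) : Std.Symm (PathAdj n) := ⟨fun _ _ h => ⟨h.2, h.1⟩⟩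

theorem pathAdj_rev_iff {n : ℕ} (a b : Fin n) : PathAdj n a.rev b.rev ↔ PathAdj n a b := by
  simp only [PathAdj, Fin.val_rev]
  omega

theorem isWEndo_iff_isRelChain {m : ℕ} (f : Function.End (Fin (m + 1))) :
    IsWEndo f ↔ IsRelChain (PathAdj (m + 1)) f := by
  simp only [IsWEndo, IsRelChain, PathAdj, Fin.forall_iff, abs_le]
  refine forall_congr' fun i => ⟨fun h hi => ?_, fun h hi => ?_⟩ <;> have := h (by omega) <;>
    simp only [Fin.castSucc_mk, Fin.succ_mk] at this ⊢ <;> omega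

/-- `(A ^ r) 0 p`, extended by `0` to `p ≥ n` so that the recursions below need no boundary
cases. -/
def pathWalks (n r p : ℕ) : ℤ :=
  if h : p < n then (relMatrix (PathAdj n) ℤ ^ r) ⟨0, by omega⟩ ⟨p, h⟩ else 0

theorem pathWalks_succ {n q : ℕ} (r : ℕ) (hq : q < n) :
    pathWalks n (r + 1) q = ∑ t ∈ Icc (q - 1) (q + 1), pathWalks n r t := by
  have hrange : pathWalks n (r + 1) q
      = ∑ t ∈ range n, if q - 1 ≤ t ∧ t ≤ q + 1 then pathWalks n r t else 0 := by
    rw [pathWalks, dif_pos hq, pow_succ, mul_apply, ← Fin.sum_univ_eq_sum_range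
      (fun t => if q - 1 ≤ t ∧ t ≤ q + 1 then pathWalks n r t else 0)]
    refine sum_congr rfl fun l _ => ?_
    simp only [relMatrix, of_apply, pathWalks, dif_pos l.isLt, mul_ite, mul_one, mul_zero]
    refine if_congr ?_ rfl rfl
    simp only [PathAdj]
    omega
  rw [hrange, ← sum_filter]
  refine sum_subset (fun t => by simp only [mem_filter, mem_Icc]; tauto) fun t _ ht => ?_
  rw [pathWalks, dif_neg]
  simp_all

theorem pathWalks_succ_zero {n : ℕ} (r : ℕ) (hn : 0 < n) :
    pathWalks n (r + 1) 0 = pathWalks n r 0 + pathWalks n r 1 := by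
  rw [pathWalks_succ r hn, Nat.zero_sub, zero_add, sum_Icc_succ_top (by omega), Icc_self,
    sum_singleton]

theorem pathWalks_succ_succ {n q : ℕ} (r : ℕ) (hq : q + 1 < n) :
    pathWalks n (r + 1) (q + 1) =
      pathWalks n r q + pathWalks n r (q + 1) + pathWalks n r (q + 2) := by
  rw [pathWalks_succ r hq, Nat.add_sub_cancel, sum_Icc_succ_top (by omega),
    sum_Icc_succ_top (by omega), Icc_self, sum_singleton]

theorem pathWalks_eq_zero_of_lt {n r p : ℕ} (h : r < p) : pathWalks n r p = 0 := by
  induction r generalizing p with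
  | zero =>
    unfold pathWalks
    split_ifs
    · simp [one_apply, Fin.ext_iff, h.ne]
    · rfl
  | succ r ih =>
    by_cases hp : p < n
    · rw [pathWalks_succ r hp]
      exact sum_eq_zero fun t ht => ih (by simp only [mem_Icc] at ht; omega)
    · exact dif_neg hp

theorem pathWalks_self {n p : ℕ} (h : p < n) : pathWalks n p p = 1 := by
  induction p with
  | zero => simp [pathWalks, h]
  | succ p ih =>
    rw [pathWalks_succ p h, sum_eq_single p, ih (by omega)]
    · exact fun t ht htp => pathWalks_eq_zero_of_lt (by simp only [mem_Icc] at ht; omega)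
    · exact fun hp => absurd (mem_Icc.2 ⟨by omega, by omega⟩) hp

theorem pathWalks_one {n p : ℕ} (h : p < n) : pathWalks n 1 p = if p ≤ 1 then 1 else 0 := by
  simp only [pathWalks, dif_pos h, pow_one, relMatrix, of_apply]
  refine if_congr ?_ rfl rfl
  simp only [PathAdj]
  omega

theorem sum_relMatrix_pathAdj {N : ℕ} (l : Fin (N + 2)) :
    ∑ k, relMatrix (PathAdj (N + 2)) ℤ l k
      = 3 - (if l = 0 then 1 else 0) - (if l = Fin.last (N + 1) then 1 else 0) := by
  have hrange : ∑ k, relMatrix (PathAdj (N + 2)) ℤ l k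
      = ∑ t ∈ range (N + 2), if (l : ℕ) ≤ t + 1 ∧ t ≤ l + 1 then 1 else 0 :=
    Fin.sum_univ_eq_sum_range
      (fun t => if (l : ℕ) ≤ t + 1 ∧ t ≤ l + 1 then (1 : ℤ) else 0) _
  have hfilter : {t ∈ range (N + 2) | (l : ℕ) ≤ t + 1 ∧ t ≤ l + 1}
      = Icc ((l : ℕ) - 1) (min ((l : ℕ) + 1) (N + 1)) := by
    ext t
    simp only [mem_filter, mem_range, mem_Icc]
    omega
  rw [hrange, sum_boole, hfilter, Nat.card_Icc]
  have := l.isLt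
  split_ifs with h0 hl hl <;> simp only [Fin.ext_iff, Fin.val_zero, Fin.val_last] at h0 hl <;> omega

theorem sum_sum_relMatrix_pathAdj_pow_succ (N m : ℕ) :
    ∑ j, ∑ k, (relMatrix (PathAdj (N + 2)) ℤ ^ (m + 1)) j k
      = 3 * ∑ j, ∑ k, (relMatrix (PathAdj (N + 2)) ℤ ^ m) j k
        - 2 * ∑ t ∈ range (N + 2), pathWalks (N + 2) m t := by
  have hwalks : ∑ t ∈ range (N + 2), pathWalks (N + 2) m t
      = ∑ k, (relMatrix (PathAdj (N + 2)) ℤ ^ m) 0 k := by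
    rw [← Fin.sum_univ_eq_sum_range]
    exact sum_congr rfl fun k _ => dif_pos k.isLt
  have hsymm : ∑ j, (relMatrix (PathAdj (N + 2)) ℤ ^ m) j 0
      = ∑ k, (relMatrix (PathAdj (N + 2)) ℤ ^ m) 0 k :=
    sum_congr rfl fun j _ => ((isSymm_relMatrix (PathAdj (N + 2)) ℤ).pow m).apply 0 j
  have hrev : ∑ j, (relMatrix (PathAdj (N + 2)) ℤ ^ m) j (Fin.last (N + 1))
      = ∑ j, (relMatrix (PathAdj (N + 2)) ℤ ^ m) j 0 := by
    rw [← Fin.rev_zero, ← Equiv.sum_comp Fin.revPerm]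
    exact sum_congr rfl fun j _ => relMatrix_pow_apply_equiv _ Fin.revPerm pathAdj_rev_iff m j 0
  simp only [Matrix.sum_sum_pow_succ, sum_relMatrix_pathAdj, mul_sub, mul_ite, mul_one, mul_zero,
    sum_sub_distrib, sum_ite_eq', mem_univ, if_true, ← sum_mul]
  rw [hrev, hsymm, hwalks]
  ring

theorem aF_eq_pathWalks {n r p : ℕ} (hr : 1 ≤ r) (hrn : r + 2 ≤ n) (hp : 1 ≤ p)
    (hpn : p < n) :
    (aF n r p : ℤ) = pathWalks n r (p - 1) := by
  induction r generalizing p with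
  | zero => omega
  | succ r ih =>
    rcases r with _ | k
    · rw [pathWalks_one (by omega)]
      simp only [aF]
      split_ifs <;> first | rfl | omega
    · simp only [aF]
      split_ifs with hlast hk h1
      · rw [show p - 1 = k + 2 by omega]
        exact_mod_cast (pathWalks_self (by omega)).symm
      · exact_mod_cast (pathWalks_eq_zero_of_lt (by omega)).symm
      · subst h1
        push_cast
        rw [ih (by omega) (by omega) le_rfl (by omega),
          ih (by omega) (by omega) (by omega) (by omega), pathWalks_succ_zero (k + 1) (by omega)]
      · obtain ⟨q, rfl⟩ : ∃ q, p = q + 2 := ⟨p - 2, by omega⟩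
        push_cast
        rw [ih (by omega) (by omega) (by omega) (by omega), ih (by omega) (by omega) hp hpn,
          ih (by omega) (by omega) (by omega) (by omega), pathWalks_succ_succ (k + 1) (by omega)]
        rfl

theorem bF_eq_two_mul_sum_pathWalks {n r : ℕ} (hr : 1 ≤ r) (hrn : r + 2 ≤ n) :
    (bF n r : ℤ) = 2 * ∑ t ∈ range n, pathWalks n r t := by
  obtain ⟨N, rfl⟩ : ∃ N, n = N + 1 := ⟨n - 1, by omega⟩
  have hlast : pathWalks (N + 1) r N = 0 := pathWalks_eq_zero_of_lt (by omega)
  rw [bF, Nat.add_sub_cancel, ← Ico_add_one_right_eq_Icc, sum_range_succ, hlast, add_zero]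
  push_cast
  rw [sum_congr rfl fun p hp => aF_eq_pathWalks hr hrn (mem_Ico.1 hp).1 (mem_Ico.1 hp).2,
    sum_Ico_eq_sum_range]
  simp

theorem sum_pathWalks_zero {n : ℕ} (hn : 0 < n) : ∑ t ∈ range n, pathWalks n 0 t = 1 := by
  rw [sum_eq_single 0 (fun t _ ht => pathWalks_eq_zero_of_lt (by omega)) (by simp [hn]),
    pathWalks_self hn]

theorem ncard_setOf_isWEndo (m : ℕ) :
    {f : Function.End (Fin (m + 1)) | IsWEndo f}.ncard = #(relChains (PathAdj (m + 1)) m) := by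
  rw [← Set.ncard_coe_finset, relChains, coe_filter_univ]
  congr 1 with f
  exact isWEndo_iff_isRelChain f

/-- `|wEnd P_n| = 3^{n-2}(3n-2) - ∑_{r=1}^{n-2} 3^{n-r-2} b(r)`. -/
theorem card_wEnd_path (n : ℕ) (hn : 2 ≤ n) :
    ({f : Function.End (Fin n) | IsWEndo f}.ncard : ℤ) =
      3 ^ (n - 2) * (3 * (n : ℤ) - 2)
        - ∑ r ∈ Finset.Icc 1 (n - 2), 3 ^ (n - r - 2) * (bF n r : ℤ) := by
  obtain ⟨N, rfl⟩ : ∃ N, n = N + 2 := ⟨n - 2, by omega⟩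
  set e : ℕ → ℤ := fun r => ∑ t ∈ range (N + 2), pathWalks (N + 2) r t
  have hinit : ∑ j, ∑ k, (relMatrix (PathAdj (N + 2)) ℤ ^ 0) j k = N + 2 := by
    simp [one_apply]
  have hwalks := eq_pow_mul_add_sum_of_succ (c := 3) (v := fun r => -(2 * e r))
    (u := fun m => ∑ j, ∑ k, (relMatrix (PathAdj (N + 2)) ℤ ^ m) j k)
    (fun m => by rw [sum_sum_relMatrix_pathAdj_pow_succ]; ring) (N + 1)
  have hb : ∀ r ∈ Icc 1 N,
      3 ^ (N + 2 - r - 2) * (bF (N + 2) r : ℤ) = 3 ^ (N - r) * (2 * e r) := by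
    intro r hr
    rw [mem_Icc] at hr
    rw [bF_eq_two_mul_sum_pathWalks hr.1 (by omega), show N + 2 - r - 2 = N - r by omega]
  rw [ncard_setOf_isWEndo, card_relChains, hwalks, hinit, range_eq_Ico,
    sum_eq_sum_Ico_succ_bot (by omega), Ico_add_one_right_eq_Icc, Nat.add_sub_cancel,
    Nat.add_sub_cancel, sum_congr rfl hb]
  simp only [mul_neg, sum_neg_distrib, e, sum_pathWalks_zero (by omega : 0 < N + 2), Nat.sub_zero,
    Nat.cast_add, Nat.cast_ofNat]
  ring
end

section
/- Let α ∈ wEnd P_n. Then α is a regular element of the monoid wEnd P_n if and only if there exists an interval I of {1,…,n} (with the usual order) such that Iα = im(α) and |I| = |im(α)|. -/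
/-!
A weak endomorphism of `P_n` is `1`-Lipschitz and, by a discrete intermediate value argument,
maps intervals onto intervals. If `fgf = f`, then `I = (im f)g` is an interval mapped onto
`im f` by `f`, and `|I| = |im f|` since neither `f` nor `g` can increase cardinalities.
Conversely, `f` maps `I = [c, d]` onto the interval `im f` of the same length; a `1`-Lipschitz
map does this only if it is `x ↦ f c ± (x - c)` on `I`, and the inverse of that, clamped to `I`,
is a weak endomorphism `g` with `fgf = f`.
-/

open Set

theorem Function.End.image_image_range_eq_of_mul_mul_eq {α : Type*} {f g : Function.End α}
    (h : f * g * f = f) : f '' (g '' range f) = range f :=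
  (image_subset_range f _).antisymm <| by
    rintro _ ⟨x, rfl⟩
    exact ⟨g (f x), mem_image_of_mem g (mem_range_self x), congrFun h x⟩

theorem Set.OrdConnected.exists_eq_Icc {α : Type*} [LinearOrder α] {s : Set α}
    (hs : s.OrdConnected) (hfin : s.Finite) (hne : s.Nonempty) :
    ∃ a b, a ≤ b ∧ s = Icc a b := by
  obtain ⟨a, ha, ha_le⟩ := exists_min_image s id hfin hne
  obtain ⟨b, hb, le_hb⟩ := exists_max_image s id hfin hne
  exact ⟨a, b, ha_le b hb,
    subset_antisymm (fun x hx => ⟨ha_le x hx, le_hb x hx⟩) (hs.out ha hb)⟩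

theorem Fin.ncard_Icc {n : ℕ} (a b : Fin n) : (Icc a b).ncard = b + 1 - a := by
  rw [← Finset.coe_Icc, ncard_coe_finset, Fin.card_Icc]

section DiscreteIVT

variable {n : ℕ} {u : Fin n → ℤ}

theorem Fin.exists_mem_Icc_eq_of_le_of_le
    (hu : ∀ i j : Fin n, (j : ℕ) = i + 1 → |u i - u j| ≤ 1) {p q : Fin n} (hpq : p ≤ q)
    {y : ℤ} (hp : u p ≤ y) (hq : y ≤ u q) : ∃ c ∈ Icc p q, u c = y := by
  classical
  -- the last point of `[p, q]` where `u` is still `≤ y`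
  obtain ⟨c, hc, hc_max⟩ := ((Finset.Icc p q).filter (u · ≤ y)).exists_max_image id
    ⟨p, by simp [hpq, hp]⟩
  simp only [Finset.mem_filter, Finset.mem_Icc, id] at hc hc_max
  refine ⟨c, hc.1, ?_⟩
  rcases hc.1.2.lt_or_eq with hcq | rfl
  · have hcn : (c : ℕ) + 1 < n := by have := q.isLt; rw [Fin.lt_def] at hcq; omega
    have hy : y < u ⟨c + 1, hcn⟩ := by
      by_contra! h
      have := hc_max ⟨c + 1, hcn⟩ ⟨⟨?_, ?_⟩, h⟩
      all_goals simp only [Fin.le_def, Fin.lt_def] at *; omega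
    have := abs_le.mp (hu c ⟨c + 1, hcn⟩ rfl)
    omega
  · exact le_antisymm hc.2 hq

theorem Fin.exists_mem_uIcc_eq
    (hu : ∀ i j : Fin n, (j : ℕ) = i + 1 → |u i - u j| ≤ 1) (p q : Fin n) {y : ℤ}
    (hy : y ∈ uIcc (u p) (u q)) : ∃ c ∈ uIcc p q, u c = y := by
  wlog hpq : p ≤ q generalizing p q
  · rw [uIcc_comm] at hy ⊢
    exact this q p hy (le_of_not_ge hpq)
  rw [uIcc_of_le hpq]
  rcases le_total (u p) (u q) with h | h
  · rw [uIcc_of_le h] at hy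
    exact exists_mem_Icc_eq_of_le_of_le hu hpq hy.1 hy.2
  · rw [uIcc_of_ge h] at hy
    have hneg : ∀ i j : Fin n, (j : ℕ) = i + 1 → |-u i - -u j| ≤ 1 := fun i j hij => by
      rw [neg_sub_neg, abs_sub_comm]
      exact hu i j hij
    obtain ⟨c, hc, hcy⟩ :=
      exists_mem_Icc_eq_of_le_of_le hneg hpq (neg_le_neg hy.2) (neg_le_neg hy.1)
    exact ⟨c, hc, neg_inj.mp hcy⟩

end DiscreteIVT

namespace IsWEndo

variable {n : ℕ} {f : Function.End (Fin n)}

theorem abs_sub_le_one (hf : IsWEndo f) (i j : Fin n) (hij : (j : ℕ) = i + 1) :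
    |(f i : ℤ) - f j| ≤ 1 := by
  obtain ⟨i, hi⟩ := i
  obtain ⟨j, hj⟩ := j
  subst hij
  exact hf i hj

theorem abs_sub_le (hf : IsWEndo f) (i j : Fin n) : |(f i : ℤ) - f j| ≤ |(i : ℤ) - j| := by
  wlog hij : i ≤ j generalizing i j
  · rw [abs_sub_comm, abs_sub_comm (i : ℤ)]
    exact this j i (le_of_not_ge hij)
  suffices key : ∀ (k : ℕ) (j : Fin n), (j : ℕ) = i + k → |(f i : ℤ) - f j| ≤ k by
    obtain ⟨k, hk⟩ := Nat.exists_eq_add_of_le (Fin.le_def.mp hij)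
    calc |(f i : ℤ) - f j| ≤ k := key k j hk
      _ = |(i : ℤ) - j| := by
        rw [abs_sub_comm, hk, Nat.cast_add, add_sub_cancel_left, Nat.abs_cast]
  intro k
  induction k with
  | zero => intro j hj; simp [Fin.ext hj.symm]
  | succ k ih =>
    intro j hj
    have hk : (i : ℕ) + k < n := by have := j.isLt; omega
    have h₁ := ih ⟨i + k, hk⟩ rfl
    have h₂ := hf.abs_sub_le_one ⟨i + k, hk⟩ j (by simp [hj, add_assoc])
    calc |(f i : ℤ) - f j|
        ≤ |(f i : ℤ) - f ⟨i + k, hk⟩| + |(f ⟨i + k, hk⟩ : ℤ) - f j| :=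
          _root_.abs_sub_le _ _ _
      _ ≤ k + 1 := add_le_add h₁ h₂
      _ = ((k + 1 : ℕ) : ℤ) := by push_cast; ring

theorem image_ordConnected (hf : IsWEndo f) {s : Set (Fin n)} (hs : s.OrdConnected) :
    (f '' s).OrdConnected := by
  rw [ordConnected_iff_uIcc_subset]
  rintro _ ⟨p, hp, rfl⟩ _ ⟨q, hq, rfl⟩ y hy
  obtain ⟨c, hc, hcy⟩ := Fin.exists_mem_uIcc_eq (u := fun x => (f x : ℤ)) hf.abs_sub_le_one
    p q (y := y) (by simp only [mem_uIcc, Fin.le_def] at hy ⊢; omega)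
  exact ⟨c, hs.uIcc_subset hp hq hc, Fin.ext (by exact_mod_cast hcy)⟩

theorem range_ordConnected (hf : IsWEndo f) : (range f).OrdConnected :=
  image_univ (f := f) ▸ hf.image_ordConnected ordConnected_univ

theorem exists_eq_affine_on_Icc (hf : IsWEndo f) {c d x₁ x₂ : Fin n} (hx₁ : x₁ ∈ Icc c d)
    (hx₂ : x₂ ∈ Icc c d) (hlen : (d : ℤ) - c ≤ f x₂ - f x₁) :
    ∃ s : ℤ, (s = 1 ∨ s = -1) ∧ ∀ x ∈ Icc c d, (f x : ℤ) = f c + s * (x - c) := by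
  have lip : ∀ i j : Fin n, i ≤ j →
      (f j : ℤ) - f i ≤ j - i ∧ (f i : ℤ) - f j ≤ j - i :=
    fun i j hij => by
      have := abs_le.mp <| (hf.abs_sub_le j i).trans_eq <| abs_of_nonneg <|
        sub_nonneg.mpr (by exact_mod_cast Fin.le_def.mp hij)
      constructor <;> linarith
  simp only [mem_Icc] at hx₁ hx₂
  -- `f` cannot stretch, so `x₁, x₂` are the two ends of `[c, d]` and `f` is tight along it
  obtain ⟨rfl, rfl⟩ | ⟨rfl, rfl⟩ : (x₁ = c ∧ x₂ = d) ∨ (x₁ = d ∧ x₂ = c) := by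
    rcases le_total x₁ x₂ with h | h
    · have := lip x₁ x₂ h
      simp only [Fin.le_def, Fin.ext_iff] at *
      omega
    · have := lip x₂ x₁ h
      simp only [Fin.le_def, Fin.ext_iff] at *
      omega
  · refine ⟨1, .inl rfl, fun x hx => ?_⟩
    have h₁ := lip x₁ x hx.1
    have h₂ := lip x x₂ hx.2
    linarith
  · refine ⟨-1, .inr rfl, fun x hx => ?_⟩
    have h₁ := lip x₂ x hx.1
    have h₂ := lip x x₁ hx.2
    linarith

theorem exists_eq_affine_of_image_Icc (hf : IsWEndo f) {c d : Fin n}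
    (hfI : f '' Icc c d = range f) (hcard : (Icc c d).ncard = (range f).ncard) :
    ∃ s : ℤ, (s = 1 ∨ s = -1) ∧ ∀ x ∈ Icc c d, (f x : ℤ) = f c + s * (x - c) := by
  obtain ⟨m, M, hmM, hmM_eq⟩ :=
    hf.range_ordConnected.exists_eq_Icc (toFinite _) ⟨f c, mem_range_self c⟩
  obtain ⟨x₁, hx₁, rfl⟩ : m ∈ f '' Icc c d := hfI ▸ hmM_eq ▸ left_mem_Icc.mpr hmM
  obtain ⟨x₂, hx₂, rfl⟩ : M ∈ f '' Icc c d := hfI ▸ hmM_eq ▸ right_mem_Icc.mpr hmM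
  refine hf.exists_eq_affine_on_Icc hx₁ hx₂ ?_
  rw [hmM_eq, Fin.ncard_Icc, Fin.ncard_Icc] at hcard
  simp only [mem_Icc, Fin.le_def] at hx₁ hmM
  omega

end IsWEndo

section ClampAffine

variable {n : ℕ}

def clampAffine (c d : Fin n) (b s : ℤ) : Function.End (Fin n) :=
  fun y => ⟨(max (c : ℤ) (min d (c + s * (y - b)))).toNat, by
    have := c.isLt
    have := d.isLt
    omega⟩

theorem isWEndo_clampAffine (c d : Fin n) (b : ℤ) {s : ℤ} (hs : s = 1 ∨ s = -1) :
    IsWEndo (clampAffine c d b s) := by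
  intro i hi
  simp only [clampAffine]
  rw [abs_le]
  rcases hs with rfl | rfl <;> constructor <;> omega

theorem clampAffine_apply {c d x : Fin n} (hx : x ∈ Icc c d) {b s : ℤ} (hs : s = 1 ∨ s = -1)
    {y : Fin n} (hy : (y : ℤ) = b + s * (x - c)) : clampAffine c d b s y = x := by
  simp only [mem_Icc, Fin.le_def] at hx
  ext
  simp only [clampAffine]
  rcases hs with rfl | rfl <;> omega

theorem mul_clampAffine_mul_eq {f : Function.End (Fin n)} {c d : Fin n} {s : ℤ}
    (hs : s = 1 ∨ s = -1) (hf_affine : ∀ x ∈ Icc c d, (f x : ℤ) = f c + s * (x - c))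
    (hfI : f '' Icc c d = range f) : f * clampAffine c d (f c) s * f = f := by
  funext z
  obtain ⟨x, hx, hxz⟩ : f z ∈ f '' Icc c d := hfI ▸ mem_range_self z
  show f (clampAffine c d (f c) s (f z)) = f z
  rw [← hxz, clampAffine_apply hx hs (hf_affine x hx)]

end ClampAffine

/-- `α ∈ wEnd P_n` is regular in `wEnd P_n` iff some order interval `I` of the vertex set
satisfies `Iα = im α` and `|I| = |im α|`. -/
theorem regular_wEnd_path_iff (n : ℕ) (f : Function.End (Fin n)) (hf : IsWEndo f) :
    (∃ g : Function.End (Fin n), IsWEndo g ∧ f * g * f = f) ↔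
      ∃ I : Set (Fin n), I.OrdConnected ∧ f '' I = Set.range f ∧
        I.ncard = (Set.range f).ncard := by
  constructor
  · rintro ⟨g, hg, hfgf⟩
    have hI := Function.End.image_image_range_eq_of_mul_mul_eq hfgf
    refine ⟨g '' range f, hg.image_ordConnected hf.range_ordConnected, hI, ?_⟩
    have hle := ncard_image_le (f := f) (toFinite (g '' range f))
    rw [hI] at hle
    exact (ncard_image_le (toFinite _)).antisymm hle
  · rintro ⟨I, hI, hfI, hcard⟩
    rcases I.eq_empty_or_nonempty with rfl | hne
    · have : IsEmpty (Fin n) := range_eq_empty_iff.mp (hfI.symm.trans (image_empty f))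
      exact ⟨f, hf, funext isEmptyElim⟩
    obtain ⟨c, d, -, rfl⟩ := hI.exists_eq_Icc (toFinite I) hne
    obtain ⟨s, hs, hf_affine⟩ := hf.exists_eq_affine_of_image_Icc hfI hcard
    exact ⟨clampAffine c d (f c) s, isWEndo_clampAffine c d _ hs,
      mul_clampAffine_mul_eq hs hf_affine hfI⟩
end

section
/- Let α ∈ End P_n. Then α is a regular element of the monoid End P_n if and only if there exists an interval I of {1,…,n} (with the usual order) such that Iα = im(α) and |I| = |im(α)|. -/
/-- Integer-valued position sequence of `f`. -/
def fI {n : ℕ} (f : Function.End (Fin n)) (i : ℕ) : ℤ :=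
  if h : i < n then (((f ⟨i, h⟩ : Fin n) : ℕ) : ℤ) else 0

lemma fI_eq {n : ℕ} (f : Function.End (Fin n)) {i : ℕ} (h : i < n) :
    fI f i = (((f ⟨i, h⟩ : Fin n) : ℕ) : ℤ) := dif_pos h

lemma fI_val {n : ℕ} (f : Function.End (Fin n)) (x : Fin n) :
    fI f (x : ℕ) = ((f x : ℕ) : ℤ) := by
  rw [fI_eq f x.isLt]

lemma endo_step {n : ℕ} {f : Function.End (Fin n)} (hf : IsEndo f) {i : ℕ} (h : i + 1 < n) :
    |fI f i - fI f (i + 1)| = 1 := by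
  rw [fI_eq f (by omega : i < n), fI_eq f h]
  exact hf i h

/-- Discrete IVT. -/
lemma ivt (h : ℕ → ℤ) (a b : ℕ) (hab : a ≤ b)
    (step : ∀ i, a ≤ i → i + 1 ≤ b → |h i - h (i + 1)| ≤ 1)
    (z : ℤ) (h1 : min (h a) (h b) ≤ z) (h2 : z ≤ max (h a) (h b)) :
    ∃ c, a ≤ c ∧ c ≤ b ∧ h c = z := by
  induction b, hab using Nat.le_induction with
  | base => exact ⟨a, le_refl a, le_refl a, by omega⟩
  | succ b hab ih =>
    have hs : |h b - h (b + 1)| ≤ 1 := step b hab (le_refl _)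
    rw [abs_le] at hs
    by_cases hc : min (h a) (h b) ≤ z ∧ z ≤ max (h a) (h b)
    · obtain ⟨c, hc1, hc2, hc3⟩ := ih (fun i hi hib => step i hi (by omega)) hc.1 hc.2
      exact ⟨c, hc1, by omega, hc3⟩
    · exact ⟨b + 1, by omega, le_refl _, by omega⟩

/-- Zigzag of amplitude `q`, period `2q`. -/
def zig (q t : ℤ) : ℤ := q - |q - t % (2 * q)|

lemma zig_nonneg (q t : ℤ) (hq : 1 ≤ q) : 0 ≤ zig q t := by
  have h0 : 0 ≤ t % (2 * q) := Int.emod_nonneg t (by omega)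
  have h1 : t % (2 * q) < 2 * q := Int.emod_lt_of_pos t (by omega)
  unfold zig
  rcases abs_cases (q - t % (2 * q)) with c | c <;> omega

lemma zig_le (q t : ℤ) (hq : 1 ≤ q) : zig q t ≤ q := by
  unfold zig
  have := abs_nonneg (q - t % (2 * q))
  omega

lemma zig_eq_self (q t : ℤ) (hq : 1 ≤ q) (h0 : 0 ≤ t) (h1 : t ≤ q) : zig q t = t := by
  unfold zig
  rw [Int.emod_eq_of_lt h0 (by omega)]
  rcases abs_cases (q - t) with c | c <;> omega

lemma zig_step (q : ℤ) (hq : 1 ≤ q) (t : ℤ) : |zig q (t + 1) - zig q t| = 1 := by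
  have h0 : 0 ≤ t % (2 * q) := Int.emod_nonneg t (by omega)
  have h1 : t % (2 * q) < 2 * q := Int.emod_lt_of_pos t (by omega)
  have hone : (1 : ℤ) % (2 * q) = 1 := Int.emod_eq_of_lt (by omega) (by omega)
  have hv : (t + 1) % (2 * q) = (t % (2 * q) + 1) % (2 * q) := by
    rw [Int.add_emod, hone]
  by_cases hc : t % (2 * q) + 1 < 2 * q
  · rw [Int.emod_eq_of_lt (by omega) hc] at hv
    unfold zig
    rw [hv, abs_eq (by norm_num : (0:ℤ) ≤ 1)]
    rcases abs_cases (q - (t % (2 * q) + 1)) with c | c <;>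
      rcases abs_cases (q - t % (2 * q)) with d | d <;> omega
  · have he : t % (2 * q) + 1 = 2 * q := by omega
    rw [he, Int.emod_self] at hv
    unfold zig
    rw [hv, abs_eq (by norm_num : (0:ℤ) ≤ 1)]
    rcases abs_cases (q - (0:ℤ)) with c | c <;>
      rcases abs_cases (q - t % (2 * q)) with d | d <;> omega

/-- A path that is injective on an index interval is affine with slope `±1`. -/
lemma run (h : ℕ → ℤ) (a b : ℕ) (hab : a < b)
    (step : ∀ i, a ≤ i → i + 1 ≤ b → |h i - h (i + 1)| = 1)
    (inj : ∀ i j, a ≤ i → i ≤ b → a ≤ j → j ≤ b → h i = h j → i = j) :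
    ∀ t, a + t ≤ b → h (a + t) = h a + (h (a + 1) - h a) * (t : ℤ) := by
  have hε : h (a + 1) - h a = 1 ∨ h (a + 1) - h a = -1 := by
    have hs := step a (le_refl a) hab
    rcases abs_cases (h a - h (a + 1)) with c | c <;> omega
  intro t
  induction t using Nat.strong_induction_on with
  | _ t ih =>
    match t with
    | 0 => intro _; push_cast; ring
    | 1 => intro _; push_cast; ring
    | (s + 2) =>
      intro hle
      have ih1 := ih (s + 1) (by omega) (by omega)
      have ih0 := ih s (by omega) (by omega)
      have hstep : |h (a + s + 1) - h (a + s + 2)| = 1 := step (a + s + 1) (by omega) (by omega)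
      have hcases : h (a + s + 2) = h (a + s + 1) + (h (a + 1) - h a) ∨
          h (a + s + 2) = h (a + s + 1) - (h (a + 1) - h a) := by
        rcases abs_cases (h (a + s + 1) - h (a + s + 2)) with c | c <;>
          rcases hε with e | e <;> omega
      have hidx1 : a + (s + 1) = a + s + 1 := by omega
      have hidx2 : a + (s + 2) = a + s + 2 := by omega
      rw [hidx1] at ih1
      rw [hidx2]
      rcases hcases with hc | hc
      · rcases hε with e | e <;> rw [e] at ih1 hc ⊢ <;> push_cast <;> push_cast at ih1 <;> omega
      · exfalso
        have heq : h (a + s + 2) = h (a + s) := by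
          rcases hε with e | e <;> rw [e] at ih1 ih0 hc <;> push_cast at ih1 ih0 <;> omega
        have := inj (a + s + 2) (a + s) (by omega) (by omega) (by omega) (by omega) heq
        omega

lemma range_ordConnected {n : ℕ} (f : Function.End (Fin n)) (hf : IsEndo f) :
    (Set.range f).OrdConnected := by
  constructor
  rintro x ⟨u, rfl⟩ y ⟨v, rfl⟩ z ⟨hz1, hz2⟩
  have hstep : ∀ i, min (u : ℕ) (v : ℕ) ≤ i → i + 1 ≤ max (u : ℕ) (v : ℕ) →
      |fI f i - fI f (i + 1)| ≤ 1 := by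
    intro i _ h2
    have : i + 1 < n := by
      have := u.isLt; have := v.isLt; omega
    exact le_of_eq (endo_step hf this)
  have hmm : min (fI f (min (u : ℕ) (v : ℕ))) (fI f (max (u : ℕ) (v : ℕ))) ≤ (z : ℕ) ∧
      ((z : ℕ) : ℤ) ≤ max (fI f (min (u : ℕ) (v : ℕ))) (fI f (max (u : ℕ) (v : ℕ))) := by
    have hz1' : ((f u : ℕ) : ℤ) ≤ ((z : ℕ) : ℤ) := by exact_mod_cast hz1
    have hz2' : ((z : ℕ) : ℤ) ≤ ((f v : ℕ) : ℤ) := by exact_mod_cast hz2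
    rcases le_total (u : ℕ) (v : ℕ) with hle | hle
    · rw [min_eq_left hle, max_eq_right hle, fI_val, fI_val]; omega
    · rw [min_eq_right hle, max_eq_left hle, fI_val, fI_val]; omega
  obtain ⟨c, _, hc2, hc3⟩ := ivt (fI f) _ _ (min_le_max) hstep ((z : ℕ) : ℤ) hmm.1 hmm.2
  have hcn : c < n := by
    have := u.isLt; have := v.isLt; omega
  refine ⟨⟨c, hcn⟩, ?_⟩
  rw [fI_eq f hcn] at hc3
  exact Fin.ext (by exact_mod_cast hc3)

/-- `α ∈ End P_n` is regular in `End P_n` iff some order interval `I` of the vertex set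
satisfies `Iα = im α` and `|I| = |im α|`. -/
theorem regular_End_path_iff (n : ℕ) (f : Function.End (Fin n)) (hf : IsEndo f) :
    (∃ g : Function.End (Fin n), IsEndo g ∧ f * g * f = f) ↔
      ∃ I : Set (Fin n), I.OrdConnected ∧ f '' I = Set.range f ∧
        I.ncard = (Set.range f).ncard := by
  constructor
  · rintro ⟨g, hg, hfg⟩
    have hfg' : ∀ x, f (g (f x)) = f x := fun x => congrFun hfg x
    have hleft : ∀ y ∈ Set.range f, f (g y) = y := by rintro y ⟨x, rfl⟩; exact hfg' x
    have hinj : Set.InjOn g (Set.range f) := by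
      intro y1 h1 y2 h2 he
      rw [← hleft y1 h1, ← hleft y2 h2, he]
    refine ⟨g '' Set.range f, ?_, ?_, Set.ncard_image_of_injOn hinj⟩
    · -- OrdConnected
      constructor
      rintro x ⟨y1, hy1, rfl⟩ y ⟨y2, hy2, rfl⟩ z ⟨hz1, hz2⟩
      have hstep : ∀ i, min (y1 : ℕ) (y2 : ℕ) ≤ i → i + 1 ≤ max (y1 : ℕ) (y2 : ℕ) →
          |fI g i - fI g (i + 1)| ≤ 1 := by
        intro i _ h2
        have : i + 1 < n := by have := y1.isLt; have := y2.isLt; omega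
        exact le_of_eq (endo_step hg this)
      have hmm : min (fI g (min (y1 : ℕ) (y2 : ℕ))) (fI g (max (y1 : ℕ) (y2 : ℕ))) ≤ ((z : ℕ) : ℤ) ∧
          ((z : ℕ) : ℤ) ≤ max (fI g (min (y1 : ℕ) (y2 : ℕ))) (fI g (max (y1 : ℕ) (y2 : ℕ))) := by
        have hz1' : ((g y1 : ℕ) : ℤ) ≤ ((z : ℕ) : ℤ) := by exact_mod_cast hz1
        have hz2' : ((z : ℕ) : ℤ) ≤ ((g y2 : ℕ) : ℤ) := by exact_mod_cast hz2
        rcases le_total (y1 : ℕ) (y2 : ℕ) with hle | hle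
        · rw [min_eq_left hle, max_eq_right hle, fI_val, fI_val]; omega
        · rw [min_eq_right hle, max_eq_left hle, fI_val, fI_val]; omega
      obtain ⟨c, hc1, hc2, hc3⟩ := ivt (fI g) _ _ (min_le_max) hstep ((z : ℕ) : ℤ) hmm.1 hmm.2
      have hcn : c < n := by have := y1.isLt; have := y2.isLt; omega
      have hcrange : (⟨c, hcn⟩ : Fin n) ∈ Set.range f := by
        rcases le_total (y1 : ℕ) (y2 : ℕ) with hle | hle
        · exact (range_ordConnected f hf).out' hy1 hy2
            ⟨by rw [Fin.le_def]; simp only [Fin.val_mk]; omega,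
             by rw [Fin.le_def]; simp only [Fin.val_mk]; omega⟩
        · exact (range_ordConnected f hf).out' hy2 hy1
            ⟨by rw [Fin.le_def]; simp only [Fin.val_mk]; omega,
             by rw [Fin.le_def]; simp only [Fin.val_mk]; omega⟩
      refine ⟨⟨c, hcn⟩, hcrange, ?_⟩
      rw [fI_eq g hcn] at hc3
      exact Fin.ext (by exact_mod_cast hc3)
    · refine subset_antisymm (Set.image_subset_range f _) ?_
      rintro y ⟨x, rfl⟩
      exact ⟨g (f x), ⟨f x, ⟨x, rfl⟩, rfl⟩, hfg' x⟩
  · rintro ⟨I, hIoc, hfI, hcard⟩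
    by_cases hn : n ≤ 1
    · refine ⟨f, hf, ?_⟩
      funext x
      exact Fin.ext (by have h1 := (f (f (f x))).isLt; have h2 := (f x).isLt; omega)
    · push_neg at hn
      have h01 : (0 : ℕ) + 1 < n := by omega
      have hne01 : f ⟨0, by omega⟩ ≠ f ⟨1, h01⟩ := by
        intro he
        have h := hf 0 h01
        rw [he] at h
        simp at h
      have hr2 : 2 ≤ (Set.range f).ncard := by
        have h1 : 1 < (Set.range f).ncard := by
          rw [Set.one_lt_ncard_iff (Set.toFinite _)]
          exact ⟨_, _, ⟨_, rfl⟩, ⟨_, rfl⟩, hne01⟩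
        omega
      have hIfin : I.Finite := Set.toFinite I
      have hIne : I.Nonempty := by
        rw [← Set.ncard_pos hIfin]
        omega
      have hsne : hIfin.toFinset.Nonempty := by rwa [Set.Finite.toFinset_nonempty]
      set a := hIfin.toFinset.min' hsne with hadef
      set b := hIfin.toFinset.max' hsne with hbdef
      have haI : a ∈ I := by
        have := hIfin.toFinset.min'_mem hsne
        rwa [Set.Finite.mem_toFinset] at this
      have hbI : b ∈ I := by
        have := hIfin.toFinset.max'_mem hsne
        rwa [Set.Finite.mem_toFinset] at this
      have hIcc : I = Set.Icc a b := by
        apply subset_antisymm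
        · intro x hx
          exact ⟨hIfin.toFinset.min'_le x (hIfin.mem_toFinset.mpr hx),
                 hIfin.toFinset.le_max' x (hIfin.mem_toFinset.mpr hx)⟩
        · exact hIoc.out' haI hbI
      have hab : (a : ℕ) ≤ (b : ℕ) :=
        hIfin.toFinset.min'_le b (hIfin.mem_toFinset.mpr hbI)
      have hcardI : I.ncard = (b : ℕ) + 1 - (a : ℕ) := by
        rw [hIcc, ← Finset.coe_Icc, Set.ncard_coe_finset, Fin.card_Icc]
      set r := (Set.range f).ncard with hrdef
      have hd : (b : ℕ) - (a : ℕ) = r - 1 := by omega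
      have haltb : (a : ℕ) < (b : ℕ) := by omega
      have hbn : (b : ℕ) < n := b.isLt
      have hinjOn : Set.InjOn f I := Set.injOn_of_ncard_image_eq (by rw [hfI, hcard]) hIfin
      have hstep : ∀ i, (a : ℕ) ≤ i → i + 1 ≤ (b : ℕ) → |fI f i - fI f (i + 1)| = 1 :=
        fun i _ h2 => endo_step hf (by omega)
      have hinj' : ∀ i j, (a : ℕ) ≤ i → i ≤ (b : ℕ) → (a : ℕ) ≤ j → j ≤ (b : ℕ) →
          fI f i = fI f j → i = j := by
        intro i j hi1 hi2 hj1 hj2 he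
        have hin : i < n := by omega
        have hjn : j < n := by omega
        have hi' : (⟨i, hin⟩ : Fin n) ∈ I := by
          rw [hIcc]
          exact ⟨by rw [Fin.le_def]; exact hi1, by rw [Fin.le_def]; exact hi2⟩
        have hj' : (⟨j, hjn⟩ : Fin n) ∈ I := by
          rw [hIcc]
          exact ⟨by rw [Fin.le_def]; exact hj1, by rw [Fin.le_def]; exact hj2⟩
        rw [fI_eq f hin, fI_eq f hjn] at he
        have := hinjOn hi' hj' (Fin.ext (by exact_mod_cast he))
        exact congrArg Fin.val this
      have hrun := run (fI f) a b haltb hstep hinj'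
      set fa := fI f (a : ℕ) with hfadef
      set ε := fI f ((a : ℕ) + 1) - fa with hεdef
      have hε : ε = 1 ∨ ε = -1 := by
        have h := hstep a (le_refl _) haltb
        rcases abs_cases (fI f (a : ℕ) - fI f ((a : ℕ) + 1)) with c | c <;> omega
      set q : ℤ := (r : ℤ) - 1 with hqdef
      have hq : 1 ≤ q := by omega
      have hzb : ∀ s : ℤ, (a : ℕ) + (zig q s).toNat < n := by
        intro s
        have h1 := zig_le q s hq
        have h2 := zig_nonneg q s hq
        omega
      obtain ⟨G, hGval⟩ : ∃ G : Function.End (Fin n),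
          ∀ j : Fin n, ((G j : ℕ) : ℤ) = ((a : ℕ) : ℤ) + zig q (ε * (((j : ℕ) : ℤ) - fa)) :=
        ⟨fun j => ⟨(a : ℕ) + (zig q (ε * (((j : ℕ) : ℤ) - fa))).toNat, hzb _⟩, fun j => by
          simp only [Fin.val_mk]
          push_cast [Int.toNat_of_nonneg (zig_nonneg q _ hq)]
          ring⟩
      have hGendo : IsEndo G := by
        intro i hi
        have e1 : fI G i = ((a : ℕ) : ℤ) + zig q (ε * ((i : ℤ) - fa)) := by
          rw [fI_eq G (by omega : i < n), hGval]
        have e2 : fI G (i + 1) = ((a : ℕ) : ℤ) + zig q (ε * ((i : ℤ) - fa) + ε) := by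
          rw [fI_eq G hi, hGval]
          congr 2
          push_cast
          ring
        have key : |fI G i - fI G (i + 1)| = 1 := by
          rw [e1, e2]
          have hsub : (((a : ℕ) : ℤ) + zig q (ε * ((i : ℤ) - fa))) -
              (((a : ℕ) : ℤ) + zig q (ε * ((i : ℤ) - fa) + ε)) =
              zig q (ε * ((i : ℤ) - fa)) - zig q (ε * ((i : ℤ) - fa) + ε) := by ring
          rw [hsub]
          set s0 := ε * ((i : ℤ) - fa) with hs0
          rcases hε with e | e <;> rw [e]
          · rw [abs_sub_comm]
            exact zig_step q hq s0
          · rw [show s0 + (-1) = (s0 - 1) from by ring]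
            have hz := zig_step q hq (s0 - 1)
            rw [show s0 - 1 + 1 = s0 from by ring] at hz
            exact hz
        rw [fI_eq G (by omega : i < n), fI_eq G hi] at key
        exact key
      refine ⟨G, hGendo, ?_⟩
      funext x
      show f (G (f x)) = f x
      have hyr : f x ∈ f '' I := by rw [hfI]; exact ⟨x, rfl⟩
      obtain ⟨w, hwI, hwy⟩ := hyr
      rw [hIcc] at hwI
      have hw1 : (a : ℕ) ≤ (w : ℕ) := Fin.le_def.mp hwI.1
      have hw2 : (w : ℕ) ≤ (b : ℕ) := Fin.le_def.mp hwI.2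
      set t := (w : ℕ) - (a : ℕ) with htdef
      have hwt : (a : ℕ) + t = (w : ℕ) := by omega
      have hrun_t := hrun t (by omega)
      have hfw : fI f ((a : ℕ) + t) = ((f w : ℕ) : ℤ) := by rw [hwt, fI_val]
      have hy : ((f x : ℕ) : ℤ) = fa + ε * (t : ℤ) := by
        rw [← hwy, ← hfw, hrun_t]
      have harg : ε * (((f x : ℕ) : ℤ) - fa) = (t : ℤ) := by
        rcases hε with e | e <;> rw [e] at hy ⊢ <;> omega
      have htq : (t : ℤ) ≤ q := by omega
      have hGy : G (f x) = w := by
        apply Fin.ext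
        have hv := hGval (f x)
        rw [harg, zig_eq_self q (t : ℤ) hq (by positivity) htq] at hv
        have : ((G (f x) : ℕ) : ℤ) = ((w : ℕ) : ℤ) := by omega
        exact_mod_cast this
      rw [hGy, hwy]
end

section
/- For n ≥ 1, the monoid wEnd P_n is regular (every element is regular) if and only if n ≤ 3. -/
private def vf (i : ℕ) : ℕ := if i = 0 then 0 else if i ≤ 2 then 1 else 2

private def W (n : ℕ) (f : Fin n → Fin n) : Prop :=
  ∀ i : Fin n, ∀ h : (i : ℕ) + 1 < n,
    |(((f i : Fin n) : ℕ) : ℤ) - (((f ⟨(i : ℕ) + 1, h⟩ : Fin n) : ℕ) : ℤ)| ≤ 1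

private instance (n : ℕ) (f : Fin n → Fin n) : Decidable (W n f) := by
  unfold W; infer_instance

private def S (n : ℕ) : Prop :=
  ∀ f : Fin n → Fin n, W n f → ∃ g : Fin n → Fin n,
    W n g ∧ ∀ x, f (g (f x)) = f x

private instance (n : ℕ) : Decidable (S n) := by
  unfold S; infer_instance

/-- The monoid `wEnd P_n` is regular if and only if `n ≤ 3`. -/
theorem wEnd_path_regular_iff (n : ℕ) (hn : 1 ≤ n) :
    (∀ f : Function.End (Fin n), IsWEndo f →
        ∃ g : Function.End (Fin n), IsWEndo g ∧ f * g * f = f) ↔ n ≤ 3 := by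
  constructor
  · intro hreg
    by_contra hn3
    push_neg at hn3
    have h4 : 4 ≤ n := hn3
    have p0 : (0 : ℕ) < n := by omega
    have p1 : (1 : ℕ) < n := by omega
    have p2 : (2 : ℕ) < n := by omega
    have p3 : (3 : ℕ) < n := by omega
    have p01 : (0 : ℕ) + 1 < n := by omega
    have p12 : (1 : ℕ) + 1 < n := by omega
    set f : Function.End (Fin n) :=
      (fun x => ⟨vf x, by unfold vf; split_ifs <;> omega⟩) with hfdef
    have hfW : IsWEndo f := by
      intro i hi
      show |((vf i : ℕ) : ℤ) - ((vf (i + 1) : ℕ) : ℤ)| ≤ 1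
      rw [abs_le]
      unfold vf
      split_ifs <;> simp_all
    obtain ⟨g, hgW, hfg⟩ := hreg f hfW
    have e0 : vf ((g ⟨0, p0⟩ : Fin n) : ℕ) = 0 :=
      congrArg Fin.val (congrFun hfg ⟨0, p0⟩)
    have e1 : vf ((g ⟨1, p1⟩ : Fin n) : ℕ) = 1 :=
      congrArg Fin.val (congrFun hfg ⟨1, p1⟩)
    have e2 : vf ((g ⟨2, p2⟩ : Fin n) : ℕ) = 2 :=
      congrArg Fin.val (congrFun hfg ⟨3, p3⟩)
    have a0 : ((g ⟨0, p0⟩ : Fin n) : ℕ) = 0 := by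
      unfold vf at e0; split_ifs at e0 <;> omega
    have a1 : 1 ≤ ((g ⟨1, p1⟩ : Fin n) : ℕ) ∧ ((g ⟨1, p1⟩ : Fin n) : ℕ) ≤ 2 := by
      unfold vf at e1; split_ifs at e1 <;> omega
    have a2 : 3 ≤ ((g ⟨2, p2⟩ : Fin n) : ℕ) := by
      unfold vf at e2; split_ifs at e2 <;> omega
    have hg01 : |(((g ⟨0, p0⟩ : Fin n) : ℕ) : ℤ) - (((g ⟨1, p1⟩ : Fin n) : ℕ) : ℤ)| ≤ 1 :=
      hgW 0 p01
    have hg12 : |(((g ⟨1, p1⟩ : Fin n) : ℕ) : ℤ) - (((g ⟨2, p2⟩ : Fin n) : ℕ) : ℤ)| ≤ 1 :=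
      hgW 1 p12
    rw [abs_le] at hg01 hg12
    omega
  · intro h3 f hf
    have hS : S n := by interval_cases n; (decide); (decide); (decide)
    obtain ⟨g, hgW, hfg⟩ := hS f (fun i hi => hf i hi)
    refine ⟨g, fun i hi => hgW ⟨i, by omega⟩ hi, ?_⟩
    funext x
    exact hfg x
end

section
/- Let α, β ∈ End P_n. Then ker(α) = ker(β) if and only if Inv(α) = Inv(β). -/
/-- The set of inversions of `α`: indices `i ∈ {2,…,n-1}` (in `0`-indexed form
`i ∈ {1,…,n-2}`) with `(i-1)α = (i+1)α ≠ iα`. -/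
def InvSet {n : ℕ} (f : Function.End (Fin n)) : Set ℕ :=
  {i | ∃ (h1 : 1 ≤ i) (h2 : i + 1 < n),
    f ⟨i - 1, by omega⟩ = f ⟨i + 1, h2⟩ ∧ f ⟨i + 1, h2⟩ ≠ f ⟨i, by omega⟩}

/-!
The steps `(i+1)α - iα` of an endomorphism of `P_n` are all `±1`, and `i` is an inversion
exactly when the steps on either side of `i` differ. Two endomorphisms with the same inversions
therefore change the sign of their steps at the same places, so the steps of `β` are a fixed
sign `ε` times those of `α`. Summing, `xβ - 1β = ε (xα - 1α)` for every vertex `x`, and hence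
`α` and `β` identify the same vertices. The converse holds because, for an endomorphism,
`i` is an inversion as soon as `(i-1)α = (i+1)α`.
-/

theorem mul_eq_mul_of_eq_iff_eq_of_abs_eq_one {a a' b b' : ℤ} (ha : |a| = 1) (ha' : |a'| = 1)
    (hb : |b| = 1) (hb' : |b'| = 1) (h : a = a' ↔ b = b') : b' * a' = b * a := by
  rcases abs_eq zero_le_one |>.mp ha with rfl | rfl <;>
  rcases abs_eq zero_le_one |>.mp ha' with rfl | rfl <;>
  rcases abs_eq zero_le_one |>.mp hb with rfl | rfl <;>
  rcases abs_eq zero_le_one |>.mp hb' with rfl | rfl <;>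
  revert h <;> norm_num

theorem eq_mul_of_abs_eq_one_of_eq_iff_eq {m : ℕ} {a b : ℕ → ℤ}
    (ha : ∀ i < m, |a i| = 1) (hb : ∀ i < m, |b i| = 1)
    (hab : ∀ i, i + 1 < m → (a i = a (i + 1) ↔ b i = b (i + 1))) :
    ∀ i < m, b i = b 0 * a 0 * a i := by
  have hprod : ∀ i < m, b i * a i = b 0 * a 0 := by
    intro i hi
    induction i with
    | zero => rfl
    | succ i ih =>
      rw [mul_eq_mul_of_eq_iff_eq_of_abs_eq_one (ha i (by omega)) (ha (i + 1) hi)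
        (hb i (by omega)) (hb (i + 1) hi) (hab i hi), ih (by omega)]
  intro i hi
  have hsq : a i * a i = 1 := by rw [← abs_mul_abs_self, ha i hi, one_mul]
  rw [← hprod i hi, mul_assoc, hsq, mul_one]

def HasUnitSteps (n : ℕ) (u : ℕ → ℤ) : Prop :=
  ∀ i, i + 1 < n → |u i - u (i + 1)| = 1

namespace HasUnitSteps

variable {n : ℕ} {u v : ℕ → ℤ}

theorem abs_step (hu : HasUnitSteps n u) {i : ℕ} (hi : i + 1 < n) :
    |u (i + 1) - u i| = 1 := by
  rw [abs_sub_comm]; exact hu i hi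

theorem eq_add_two_iff (hu : HasUnitSteps n u) {i : ℕ} (hi : i + 2 < n) :
    u i = u (i + 2) ↔ ¬ u (i + 1) - u i = u (i + 2) - u (i + 1) := by
  rcases abs_eq zero_le_one |>.mp (hu.abs_step (i := i) (by omega)) with h | h <;>
  rcases abs_eq zero_le_one |>.mp (hu.abs_step (i := i + 1) hi) with h' | h' <;>
  simp only [Nat.add_assoc, Nat.reduceAdd] at h' <;>
  omega

theorem exists_step_eq_mul (hu : HasUnitSteps n u) (hv : HasUnitSteps n v)
    (huv : ∀ i, i + 2 < n → (u i = u (i + 2) ↔ v i = v (i + 2))) :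
    ∃ ε : ℤ, ∀ i, i + 1 < n → v (i + 1) - v i = ε * (u (i + 1) - u i) := by
  refine ⟨_, fun i hi => eq_mul_of_abs_eq_one_of_eq_iff_eq (m := n - 1)
    (a := fun i => u (i + 1) - u i) (b := fun i => v (i + 1) - v i)
    (fun j hj => hu.abs_step (by omega)) (fun j hj => hv.abs_step (by omega))
    (fun j hj => ?_) i (by omega)⟩
  have hj' : j + 2 < n := by omega
  simpa only [hu.eq_add_two_iff hj', hv.eq_add_two_iff hj', not_iff_not, Nat.add_assoc,
    Nat.reduceAdd] using huv j hj'

theorem eq_of_eq (hu : HasUnitSteps n u) (hv : HasUnitSteps n v)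
    (huv : ∀ i, i + 2 < n → (u i = u (i + 2) ↔ v i = v (i + 2)))
    {x y : ℕ} (hx : x < n) (hy : y < n) (hxy : u x = u y) : v x = v y := by
  obtain ⟨ε, hε⟩ := hu.exists_step_eq_mul hv huv
  have hsum : ∀ i < n, v i - v 0 = ε * (u i - u 0) := by
    intro i hi
    induction i with
    | zero => simp
    | succ i ih => linear_combination hε i hi + ih (by omega)
  linear_combination hsum x hx - hsum y hy + ε * hxy

end HasUnitSteps

/-- The values of `f` as integers; those at `i ≥ n` are junk (`0`). -/
def pathSeq {n : ℕ} (f : Function.End (Fin n)) (i : ℕ) : ℤ :=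
  if h : i < n then (f ⟨i, h⟩ : ℕ) else 0

theorem pathSeq_eq_iff {n : ℕ} (f : Function.End (Fin n)) (x y : Fin n) :
    pathSeq f x = pathSeq f y ↔ f x = f y := by
  simp [pathSeq, Fin.val_inj]

namespace IsEndo

variable {n : ℕ} {f : Function.End (Fin n)}

theorem hasUnitSteps (hf : IsEndo f) : HasUnitSteps n (pathSeq f) := by
  intro i hi
  simpa [pathSeq, hi, Nat.lt_of_succ_lt hi] using hf i hi

theorem succ_mem_invSet_iff (hf : IsEndo f) (i : ℕ) :
    i + 1 ∈ InvSet f ↔ ∃ h : i + 2 < n, f ⟨i, by omega⟩ = f ⟨i + 2, h⟩ := by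
  have hne (h : i + 2 < n) : f ⟨i + 2, h⟩ ≠ f ⟨i + 1, by omega⟩ := by
    intro heq
    simpa [heq] using hf (i + 1) h
  simp only [InvSet, Set.mem_ofPred_eq, Nat.add_sub_cancel]
  exact ⟨fun ⟨_, h, heq, _⟩ => ⟨h, heq⟩, fun ⟨h, heq⟩ => ⟨by omega, h, heq, hne h⟩⟩

theorem pathSeq_eq_add_two_iff (hf : IsEndo f) {i : ℕ} (hi : i + 2 < n) :
    pathSeq f i = pathSeq f (i + 2) ↔ i + 1 ∈ InvSet f := by
  rw [hf.succ_mem_invSet_iff, exists_prop_of_true hi]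
  exact pathSeq_eq_iff f ⟨i, by omega⟩ ⟨i + 2, hi⟩

end IsEndo

theorem zero_notMem_invSet {n : ℕ} (f : Function.End (Fin n)) : 0 ∉ InvSet f :=
  fun ⟨h, _⟩ => absurd h (by omega)

/-- For `α, β ∈ End P_n`: `ker α = ker β` if and only if `Inv α = Inv β`. -/
theorem End_path_ker_eq_iff_inv_eq (n : ℕ) (f g : Function.End (Fin n))
    (hf : IsEndo f) (hg : IsEndo g) :
    (∀ x y : Fin n, f x = f y ↔ g x = g y) ↔ InvSet f = InvSet g := by
  constructor
  · intro hker
    ext (_ | i)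
    · simp only [zero_notMem_invSet]
    · simp only [hf.succ_mem_invSet_iff, hg.succ_mem_invSet_iff, hker]
  · intro hinv
    have hturn (i : ℕ) (hi : i + 2 < n) :
        pathSeq f i = pathSeq f (i + 2) ↔ pathSeq g i = pathSeq g (i + 2) := by
      rw [hf.pathSeq_eq_add_two_iff hi, hg.pathSeq_eq_add_two_iff hi, hinv]
    intro x y
    rw [← pathSeq_eq_iff f, ← pathSeq_eq_iff g]
    exact ⟨hf.hasUnitSteps.eq_of_eq hg.hasUnitSteps hturn x.2 y.2,
      hg.hasUnitSteps.eq_of_eq hf.hasUnitSteps (fun i hi => (hturn i hi).symm) x.2 y.2⟩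
end

section
/- Let α, β ∈ wEnd P_n be such that the composition αβ belongs to End P_n. Then: (1) α ∈ End P_n; (2) Inv(α) ⊆ Inv(αβ); and (3) {i ∈ {2,…,n−1} : iα ∈ Inv(β)} ⊆ Inv(αβ). -/
lemma aux1 {a b : ℤ} (h : |a - b| ≤ 1) (h2 : |a - b| ≠ 1) : a = b := by
  rcases abs_le.mp h with ⟨hl, hr⟩
  by_contra hne
  apply h2
  rw [abs_eq zero_le_one]
  omega

lemma aux2 {a b : ℤ} (h : |a - b| = 1) : a = b - 1 ∨ a = b + 1 := by
  rw [abs_eq zero_le_one] at h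
  omega

/-- If `α, β ∈ wEnd P_n` and the composite `αβ` (first `α`, then `β`; below `g * f` since
`*` in `Function.End` is `∘`) is in `End P_n`, then `α ∈ End P_n`, `Inv α ⊆ Inv (αβ)`,
and every `i ∈ {2,…,n-1}` with `iα ∈ Inv β` lies in `Inv (αβ)`. -/
theorem wEnd_path_comp_End (n : ℕ) (f g : Function.End (Fin n))
    (hf : IsWEndo f) (hg : IsWEndo g) (hfg : IsEndo (g * f)) :
    IsEndo f ∧ InvSet f ⊆ InvSet (g * f) ∧
      {i : ℕ | ∃ h : i < n, 1 ≤ i ∧ i + 1 < n ∧ ((f ⟨i, h⟩ : Fin n) : ℕ) ∈ InvSet g}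
        ⊆ InvSet (g * f) := by

  have hmul : ∀ x : Fin n, (g * f) x = g (f x) := fun _ => rfl
  have key : IsEndo f := by
    intro i h
    by_contra hne
    have h0 : f ⟨i, by omega⟩ = f ⟨i + 1, h⟩ :=
      Fin.ext (by exact_mod_cast aux1 (hf i h) hne)
    have h1 := hfg i h
    rw [hmul, hmul, h0] at h1
    simp at h1
  refine ⟨key, ?_, ?_⟩
  · rintro i ⟨h1, h2, heq, hne⟩
    refine ⟨h1, h2, ?_, ?_⟩
    · rw [hmul, hmul, heq]
    · rw [hmul, hmul]
      intro hc
      have h3 := hfg i h2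
      rw [hmul, hmul, hc] at h3
      simp at h3
  · rintro i ⟨h, hi1, hi2, hj1, hj2, hgeq, hgne⟩
    set j : ℕ := ((f ⟨i, h⟩ : Fin n) : ℕ) with hjdef
    have e1 : (⟨i - 1 + 1, by omega⟩ : Fin n) = ⟨i, h⟩ := Fin.ext (by simp; omega)
    have hA := key (i - 1) (by omega)
    rw [e1] at hA
    have hB := key i hi2
    have hA' := aux2 hA
    have hB' : (((f ⟨i + 1, hi2⟩ : Fin n) : ℕ) : ℤ) = (j : ℤ) - 1 ∨
        (((f ⟨i + 1, hi2⟩ : Fin n) : ℕ) : ℤ) = (j : ℤ) + 1 := by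
      rw [abs_sub_comm] at hB
      exact aux2 hB
    have hfi : f ⟨i, by omega⟩ = ⟨j, by omega⟩ := Fin.ext rfl
    have ha : f ⟨i - 1, by omega⟩ = (⟨j - 1, by omega⟩ : Fin n) ∨
        f ⟨i - 1, by omega⟩ = (⟨j + 1, by omega⟩ : Fin n) := by
      rcases hA' with h' | h'
      · exact Or.inl (Fin.ext (by simp only []; omega))
      · exact Or.inr (Fin.ext (by simp only []; omega))
    have hb : f ⟨i + 1, hi2⟩ = (⟨j - 1, by omega⟩ : Fin n) ∨
        f ⟨i + 1, hi2⟩ = (⟨j + 1, by omega⟩ : Fin n) := by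
      rcases hB' with h' | h'
      · exact Or.inl (Fin.ext (by simp only []; omega))
      · exact Or.inr (Fin.ext (by simp only []; omega))
    refine ⟨hi1, hi2, ?_, ?_⟩
    · rw [hmul, hmul]
      rcases ha with h' | h' <;> rcases hb with h'' | h''
      · exact (congrArg g h').trans (congrArg g h'').symm
      · exact (congrArg g h').trans (hgeq.trans (congrArg g h'').symm)
      · exact (congrArg g h').trans (hgeq.symm.trans (congrArg g h'').symm)
      · exact (congrArg g h').trans (congrArg g h'').symm
    · rw [hmul, hmul]
      intro hc
      rcases hb with h' | h'
      · exact hgne (hgeq.symm.trans (((congrArg g h').symm.trans hc).trans (congrArg g hfi)))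
      · exact hgne (((congrArg g h').symm.trans hc).trans (congrArg g hfi))
end

section
/- Let C be a generating set of the monoid End P_n or of the monoid wEnd P_n. Then C contains at least ⌊(n−1)/2⌋ distinct transformations α with inv(α) = 1, and at least Σ_{j=1}^{⌊(n−3)/3⌋} ⌊(n−3j−1)/2⌋ distinct transformations α with inv(α) = 2. -/
/-!
Write an endomorphism with inversion set `S` as a product of generators and peel them off from
the left, `g * h`. The right factor `h` is a weak endomorphism, hence an endomorphism with
`InvSet h ⊆ S`. For `S = {t}`, and for `S = {t₁, t₂}` whose gap `t₂ - t₁` is below `t₁` and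
`n - 1 - t₂`, in fact `InvSet h` is `S` or `∅`: an endomorphism is symmetric about an inversion
until the next one, so a right factor with the single inversion `t₁` would make `g * h` agree at
`t₁ - (t₂ - t₁) - 1` and `t₂ + 1`, which an endomorphism with inversions exactly `t₁, t₂` does
not. An endomorphism without inversions is `1` or the reversal, so eventually a generator has
inversion set `S` up to reversal, and distinct admissible `S` up to reversal give distinct
generators.
-/

lemma Submonoid.exists_mem_of_mem_closure {M : Type*} [Monoid M] {s : Set M} {p : M → Prop}
    (h1 : ¬ p 1) (hmul : ∀ x ∈ s, ∀ y ∈ closure s, p (x * y) → p x ∨ p y) {z : M}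
    (hz : z ∈ closure s) (hpz : p z) : ∃ x ∈ s, p x := by
  induction hz using Submonoid.closure_induction_left with
  | one => exact absurd hpz h1
  | mul_left x hx y hy ih =>
    exact (hmul x hx y hy hpz).elim (fun h => ⟨x, hx, h⟩) ih

namespace PathEnd

variable {n : ℕ}

/-- `f i` as a natural number, with junk value `0` for `n ≤ i`, so that index arithmetic
stays in `ℕ` without bound proofs. -/
def natApply (f : Function.End (Fin n)) (i : ℕ) : ℕ := if h : i < n then f ⟨i, h⟩ else 0

lemma natApply_of_lt (f : Function.End (Fin n)) {i : ℕ} (h : i < n) :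
    natApply f i = f ⟨i, h⟩ :=
  dif_pos h

lemma natApply_lt (f : Function.End (Fin n)) {i : ℕ} (h : i < n) : natApply f i < n := by
  rw [natApply_of_lt f h]
  exact (f _).isLt

lemma natApply_mul (g h : Function.End (Fin n)) {i : ℕ} (hi : i < n) :
    natApply (g * h) i = natApply g (natApply h i) := by
  rw [natApply_of_lt _ hi, natApply_of_lt g (natApply_lt h hi)]
  simp only [natApply_of_lt h hi]
  rfl

lemma natApply_one {i : ℕ} (hi : i < n) : natApply (1 : Function.End (Fin n)) i = i :=
  natApply_of_lt _ hi

lemma apply_eq_apply_iff (f : Function.End (Fin n)) {a b : ℕ} (ha : a < n) (hb : b < n) :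
    f ⟨a, ha⟩ = f ⟨b, hb⟩ ↔ natApply f a = natApply f b := by
  rw [natApply_of_lt f ha, natApply_of_lt f hb, Fin.val_inj]

lemma isEndo_iff (f : Function.End (Fin n)) :
    IsEndo f ↔ ∀ i, i + 1 < n →
      natApply f (i + 1) = natApply f i + 1 ∨ natApply f i = natApply f (i + 1) + 1 := by
  refine forall_congr' fun i => forall_congr' fun hi => ?_
  rw [natApply_of_lt f hi, natApply_of_lt f (by omega), abs_eq zero_le_one]
  omega

lemma isWEndo_iff (f : Function.End (Fin n)) :
    IsWEndo f ↔ ∀ i, i + 1 < n →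
      natApply f (i + 1) ≤ natApply f i + 1 ∧ natApply f i ≤ natApply f (i + 1) + 1 := by
  refine forall_congr' fun i => forall_congr' fun hi => ?_
  rw [natApply_of_lt f hi, natApply_of_lt f (by omega), abs_le]
  omega

lemma isWEndo_of_isEndo {f : Function.End (Fin n)} (hf : IsEndo f) : IsWEndo f :=
  fun i hi => (hf i hi).le

lemma mem_invSet (f : Function.End (Fin n)) {i : ℕ} :
    i ∈ InvSet f ↔ 1 ≤ i ∧ i + 1 < n ∧
      natApply f (i - 1) = natApply f (i + 1) ∧ natApply f (i + 1) ≠ natApply f i := by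
  constructor
  · rintro ⟨h1, h2, heq, hne⟩
    exact ⟨h1, h2, (apply_eq_apply_iff f _ h2).mp heq, (apply_eq_apply_iff f h2 _).not.mp hne⟩
  · rintro ⟨h1, h2, heq, hne⟩
    exact ⟨h1, h2, (apply_eq_apply_iff f _ h2).mpr heq,
      (apply_eq_apply_iff f h2 _).not.mpr hne⟩

lemma invSet_one : InvSet (1 : Function.End (Fin n)) = ∅ := by
  ext i
  simp only [Set.mem_empty_iff_false, iff_false, mem_invSet]
  rintro ⟨h1, h2, heq, -⟩
  rw [natApply_one (by omega), natApply_one h2] at heq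
  omega

def rev : Function.End (Fin n) := Fin.rev

lemma natApply_rev {i : ℕ} (hi : i < n) :
    natApply (rev : Function.End (Fin n)) i = n - 1 - i := by
  rw [natApply_of_lt _ hi]
  simp only [rev, Fin.val_rev]
  omega

lemma rev_mul_rev : (rev : Function.End (Fin n)) * rev = 1 :=
  funext Fin.rev_rev

lemma natApply_mul_rev (f : Function.End (Fin n)) {i : ℕ} (hi : i < n) :
    natApply (f * rev) i = natApply f (n - 1 - i) := by
  rw [natApply_mul f rev hi, natApply_rev hi]

lemma isEndo_mul_rev {f : Function.End (Fin n)} (hf : IsEndo f) : IsEndo (f * rev) := by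
  rw [isEndo_iff] at hf ⊢
  intro i hi
  rw [natApply_mul_rev f hi, natApply_mul_rev f (by omega)]
  have := hf (n - 1 - (i + 1)) (by omega)
  rw [show n - 1 - (i + 1) + 1 = n - 1 - i by omega] at this
  omega

lemma isWEndo_mul_rev {f : Function.End (Fin n)} (hf : IsWEndo f) : IsWEndo (f * rev) := by
  rw [isWEndo_iff] at hf ⊢
  intro i hi
  rw [natApply_mul_rev f hi, natApply_mul_rev f (by omega)]
  have := hf (n - 1 - (i + 1)) (by omega)
  rw [show n - 1 - (i + 1) + 1 = n - 1 - i by omega] at this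
  omega

lemma mem_invSet_of_mem_invSet_mul_rev {f : Function.End (Fin n)} {i : ℕ}
    (hi : i ∈ InvSet (f * rev)) : n - 1 - i ∈ InvSet f := by
  obtain ⟨h1, h2, heq, hne⟩ := (mem_invSet _).mp hi
  rw [natApply_mul_rev f (by omega), natApply_mul_rev f h2] at heq
  rw [natApply_mul_rev f h2, natApply_mul_rev f (by omega)] at hne
  refine (mem_invSet f).mpr ⟨by omega, by omega, ?_, ?_⟩
  · rw [show n - 1 - i - 1 = n - 1 - (i + 1) by omega,
      show n - 1 - i + 1 = n - 1 - (i - 1) by omega]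
    exact heq.symm
  · rw [show n - 1 - i + 1 = n - 1 - (i - 1) by omega, heq]
    exact hne

lemma invSet_mul_rev (f : Function.End (Fin n)) :
    InvSet (f * rev) = (fun i => n - 1 - i) '' InvSet f := by
  ext i
  constructor
  · intro hi
    have := ((mem_invSet _).mp hi).2.1
    exact ⟨n - 1 - i, mem_invSet_of_mem_invSet_mul_rev hi, by dsimp only; omega⟩
  · rintro ⟨j, hj, rfl⟩
    exact mem_invSet_of_mem_invSet_mul_rev (f := f * rev)
      (by rwa [mul_assoc, rev_mul_rev, mul_one])

lemma ncard_invSet_mul_rev (f : Function.End (Fin n)) :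
    (InvSet (f * rev)).ncard = (InvSet f).ncard := by
  rw [invSet_mul_rev]
  refine Set.InjOn.ncard_image fun i hi j hj hij => ?_
  have := ((mem_invSet f).mp hi).2.1
  have := ((mem_invSet f).mp hj).2.1
  omega

/-- `h` cannot collapse an edge, since `g * h` does not. -/
lemma isEndo_of_mul_right {g h : Function.End (Fin n)} (hf : IsEndo (g * h)) (hh : IsWEndo h) :
    IsEndo h := by
  rw [isEndo_iff] at hf ⊢
  rw [isWEndo_iff] at hh
  intro i hi
  have hfi := hf i hi
  rw [natApply_mul g h hi, natApply_mul g h (by omega)] at hfi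
  have hne : natApply h i ≠ natApply h (i + 1) := fun H => by rw [H] at hfi; omega
  have := hh i hi
  omega

lemma invSet_subset_of_mul {g h : Function.End (Fin n)} (hf : IsEndo (g * h)) :
    InvSet h ⊆ InvSet (g * h) := by
  intro i hi
  obtain ⟨h1, h2, heq, -⟩ := (mem_invSet h).mp hi
  have hstep := (isEndo_iff _).mp hf i h2
  refine (mem_invSet _).mpr ⟨h1, h2, ?_, by omega⟩
  rw [natApply_mul g h (by omega), natApply_mul g h h2, heq]

lemma natApply_sub_one_add_natApply_add_one {f : Function.End (Fin n)} (hf : IsEndo f)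
    {i : ℕ} (h1 : 1 ≤ i) (h2 : i + 1 < n) (hi : i ∉ InvSet f) :
    natApply f (i - 1) + natApply f (i + 1) = 2 * natApply f i := by
  have hl := (isEndo_iff f).mp hf (i - 1) (by omega)
  rw [show i - 1 + 1 = i by omega] at hl
  have hr := (isEndo_iff f).mp hf i h2
  rw [mem_invSet] at hi
  omega

lemma natApply_succ_add_natApply_zero {f : Function.End (Fin n)} (hf : IsEndo f)
    (hI : InvSet f = ∅) {i : ℕ} (hi : i + 1 < n) :
    natApply f (i + 1) + natApply f 0 = natApply f i + natApply f 1 := by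
  induction i with
  | zero => exact Nat.add_comm _ _
  | succ i ih =>
    have := natApply_sub_one_add_natApply_add_one hf (i := i + 1) (by omega) hi (by simp [hI])
    rw [Nat.add_sub_cancel] at this
    have := ih (by omega)
    omega

lemma eq_one_or_eq_rev_of_invSet_eq_empty {f : Function.End (Fin n)} (hf : IsEndo f)
    (hI : InvSet f = ∅) : f = 1 ∨ f = rev := by
  rcases Nat.lt_or_ge n 2 with hn | hn
  · refine Or.inl (funext fun x => Fin.ext ?_)
    have := (f x).isLt
    have := x.isLt
    change (f x : ℕ) = x
    omega
  have hlin : ∀ i < n,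
      (natApply f i : ℤ) = natApply f 0 + i * ((natApply f 1 : ℤ) - natApply f 0) := by
    intro i hi
    induction i with
    | zero => simp
    | succ i ih =>
      have := natApply_succ_add_natApply_zero hf hI hi
      push_cast
      linarith [ih (by omega)]
  have hlast := natApply_lt f (show n - 1 < n by omega)
  have hend := hlin (n - 1) (by omega)
  have hval : ∀ x : Fin n,
      ((f x : ℕ) : ℤ) = natApply f 0 + x * ((natApply f 1 : ℤ) - natApply f 0) :=
    fun x => by rw [← hlin x x.isLt, natApply_of_lt f x.isLt]
  have hstart := (isEndo_iff f).mp hf 0 (by omega)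
  rw [zero_add] at hstart
  rcases hstart with hup | hdown
  · have hd : (natApply f 1 : ℤ) - natApply f 0 = 1 := by omega
    refine Or.inl (funext fun x => Fin.ext ?_)
    have := hval x
    rw [hd] at this hend
    change (f x : ℕ) = x
    omega
  · have hd : (natApply f 1 : ℤ) - natApply f 0 = -1 := by omega
    have := natApply_lt f (show 0 < n by omega)
    refine Or.inr (funext fun x => Fin.ext ?_)
    have := hval x
    rw [hd] at this hend
    change (f x : ℕ) = (Fin.rev x : ℕ)
    rw [Fin.val_rev]
    omega

/-- Each non-inversion propagates the equality one step outwards. -/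
lemma natApply_sub_eq_natApply_add {f : Function.End (Fin n)} (hf : IsEndo f) {t s : ℕ}
    (ht : t ∈ InvSet f) (hst : s ≤ t) (hsn : t + s < n)
    (hfree : ∀ k, 0 < k → k < s → t - k ∉ InvSet f ∧ t + k ∉ InvSet f) :
    natApply f (t - s) = natApply f (t + s) := by
  induction s using Nat.strong_induction_on with
  | _ s ih =>
    rcases s with _ | _ | s
    · rfl
    · exact ((mem_invSet f).mp ht).2.2.1
    · have hin := ih (s + 1) (by omega) (by omega) (by omega)
        (fun k hk hk' => hfree k hk (by omega))
      have hout := ih s (by omega) (by omega) (by omega) (fun k hk hk' => hfree k hk (by omega))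
      have hL := natApply_sub_one_add_natApply_add_one hf (i := t - (s + 1)) (by omega)
        (by omega) (hfree (s + 1) (by omega) (by omega)).1
      have hR := natApply_sub_one_add_natApply_add_one hf (i := t + (s + 1)) (by omega)
        (by omega) (hfree (s + 1) (by omega) (by omega)).2
      rw [show t - (s + 1) - 1 = t - (s + 1 + 1) by omega,
        show t - (s + 1) + 1 = t - s by omega] at hL
      rw [show t + (s + 1) - 1 = t + s by omega,
        show t + (s + 1) + 1 = t + (s + 1 + 1) by omega] at hR
      omega

lemma natApply_sub_eq_natApply_add_of_invSet_eq_singleton {f : Function.End (Fin n)}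
    (hf : IsEndo f) {t s : ℕ} (hI : InvSet f = {t}) (hst : s ≤ t) (hsn : t + s < n) :
    natApply f (t - s) = natApply f (t + s) :=
  natApply_sub_eq_natApply_add hf (by simp [hI]) hst hsn fun k hk _ => by
    simp only [hI, Set.mem_singleton_iff]
    omega

/-- The symmetry about `t₁` carries `t₁ - (t₂ - t₁)` to `t₂`, and the inversion at `t₂` breaks
it one step further out. -/
lemma natApply_ne_of_invSet_eq_pair {f : Function.End (Fin n)} (hf : IsEndo f) {t₁ t₂ : ℕ}
    (hI : InvSet f = {t₁, t₂}) (h12 : t₁ < t₂) (hm : t₂ - t₁ < t₁) :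
    natApply f (t₁ - (t₂ - t₁ + 1)) ≠ natApply f (t₂ + 1) := by
  have ht₂ := (mem_invSet f).mp (show t₂ ∈ InvSet f by simp [hI])
  have hfree : ∀ s ≤ t₂ - t₁, ∀ k, 0 < k → k < s → t₁ - k ∉ InvSet f ∧ t₁ + k ∉ InvSet f :=
    fun s hs k hk hks => by
      simp only [hI, Set.mem_insert_iff, Set.mem_singleton_iff]
      omega
  have hsym : ∀ s ≤ t₂ - t₁, natApply f (t₁ - s) = natApply f (t₁ + s) := fun s hs =>
    natApply_sub_eq_natApply_add hf (by simp [hI]) (by omega) (by omega) (hfree s hs)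
  have hmid := hsym (t₂ - t₁) le_rfl
  have hnext := hsym (t₂ - t₁ - 1) (by omega)
  have haff := natApply_sub_one_add_natApply_add_one hf (i := t₁ - (t₂ - t₁)) (by omega)
    (by omega) (by simp only [hI, Set.mem_insert_iff, Set.mem_singleton_iff]; omega)
  have hstep := (isEndo_iff f).mp hf (t₂ - 1) (by omega)
  rw [show t₁ + (t₂ - t₁) = t₂ by omega] at hmid
  rw [show t₁ + (t₂ - t₁ - 1) = t₂ - 1 by omega,
    show t₁ - (t₂ - t₁ - 1) = t₁ - (t₂ - t₁) + 1 by omega] at hnext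
  rw [show t₁ - (t₂ - t₁) - 1 = t₁ - (t₂ - t₁ + 1) by omega] at haff
  rw [show t₂ - 1 + 1 = t₂ by omega] at hstep
  omega

def IsRigid (n : ℕ) (S : Set ℕ) : Prop :=
  ∀ g h : Function.End (Fin n), IsEndo (g * h) → IsWEndo h → InvSet (g * h) = S →
    InvSet h = ∅ ∨ InvSet h = S

lemma isRigid_singleton (t : ℕ) : IsRigid n {t} := fun _ _ hf _ hI =>
  Set.subset_singleton_iff_eq.mp (hI ▸ invSet_subset_of_mul hf)

lemma invSet_ne_singleton_left_of_mul {g h : Function.End (Fin n)} (hf : IsEndo (g * h))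
    (hh : IsEndo h) {t₁ t₂ : ℕ} (hI : InvSet (g * h) = {t₁, t₂}) (h12 : t₁ < t₂)
    (hm : t₂ - t₁ < t₁) : InvSet h ≠ {t₁} := by
  intro hh₁
  have ht₂ := ((mem_invSet _).mp (show t₂ ∈ InvSet (g * h) by simp [hI])).2.1
  have hsym := natApply_sub_eq_natApply_add_of_invSet_eq_singleton hh hh₁
    (s := t₂ - t₁ + 1) (by omega) (by omega)
  rw [show t₁ + (t₂ - t₁ + 1) = t₂ + 1 by omega] at hsym
  apply natApply_ne_of_invSet_eq_pair hf hI h12 hm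
  rw [natApply_mul g h (by omega), natApply_mul g h ht₂, hsym]

/-- The second inversion is handled by reversing the path, which swaps the roles of `t₁`
and `t₂`. -/
lemma isRigid_pair {t₁ t₂ : ℕ} (h12 : t₁ < t₂) (hm₁ : t₂ - t₁ < t₁)
    (hm₂ : t₂ - t₁ < n - 1 - t₂) : IsRigid n {t₁, t₂} := by
  intro g h hf hh hI
  have hhE := isEndo_of_mul_right hf hh
  rcases Set.subset_pair_iff_eq.mp (hI ▸ invSet_subset_of_mul hf) with h0 | h1 | h2 | h12'
  · exact Or.inl h0
  · exact absurd h1 (invSet_ne_singleton_left_of_mul hf hhE hI h12 hm₁)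
  · have ht₂ := ((mem_invSet _).mp (show t₂ ∈ InvSet (g * h) by simp [hI])).2.1
    refine absurd ?_ (invSet_ne_singleton_left_of_mul (g := g) (h := h * rev)
      (t₁ := n - 1 - t₂) (t₂ := n - 1 - t₁)
      (by rw [← mul_assoc]; exact isEndo_mul_rev hf) (isEndo_mul_rev hhE) ?_
      (by omega) (by omega))
    · rw [invSet_mul_rev, h2, Set.image_singleton]
    · rw [← mul_assoc, invSet_mul_rev, hI, Set.image_pair, Set.pair_comm]
  · exact Or.inr h12'

def HasInvSetUpToRev (S : Set ℕ) (f : Function.End (Fin n)) : Prop :=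
  IsEndo f ∧ (InvSet f = S ∨ InvSet (f * rev) = S)

lemma HasInvSetUpToRev.mul_rev {S : Set ℕ} {f : Function.End (Fin n)}
    (hf : HasInvSetUpToRev S f) : HasInvSetUpToRev S (f * rev) := by
  refine ⟨isEndo_mul_rev hf.1, hf.2.symm.imp_right fun h => ?_⟩
  rwa [mul_assoc, rev_mul_rev, mul_one]

lemma hasInvSetUpToRev_mul_rev_iff {S : Set ℕ} {f : Function.End (Fin n)} :
    HasInvSetUpToRev S (f * rev) ↔ HasInvSetUpToRev S f :=
  ⟨fun hf => by simpa [mul_assoc, rev_mul_rev] using hf.mul_rev, HasInvSetUpToRev.mul_rev⟩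

lemma HasInvSetUpToRev.ncard_invSet {S : Set ℕ} {f : Function.End (Fin n)}
    (hf : HasInvSetUpToRev S f) : (InvSet f).ncard = S.ncard := by
  rcases hf.2 with h | h
  · rw [h]
  · rw [← h, ncard_invSet_mul_rev]

lemma HasInvSetUpToRev.invSet_eq_or_image_eq {S : Set ℕ} {f : Function.End (Fin n)}
    (hf : HasInvSetUpToRev S f) :
    InvSet f = S ∨ (fun i => n - 1 - i) '' InvSet f = S := by
  rw [← invSet_mul_rev]
  exact hf.2

lemma not_hasInvSetUpToRev_one {S : Set ℕ} (hS : S.Nonempty) :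
    ¬ HasInvSetUpToRev S (1 : Function.End (Fin n)) := by
  rintro ⟨-, h | h⟩
  · exact hS.ne_empty (h ▸ invSet_one)
  · rw [one_mul, ← one_mul rev, invSet_mul_rev, invSet_one, Set.image_empty] at h
    exact hS.ne_empty h.symm

/-- Replacing `h` by `h * rev` reduces to the case `InvSet (g * h) = S`. -/
lemma HasInvSetUpToRev.of_mul {S : Set ℕ} (hS : IsRigid n S) {g h : Function.End (Fin n)}
    (hgh : HasInvSetUpToRev S (g * h)) (hh : IsWEndo h) :
    HasInvSetUpToRev S g ∨ HasInvSetUpToRev S h := by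
  wlog hI : InvSet (g * h) = S generalizing h
  · have := this (h := h * rev) (by rwa [← mul_assoc, hasInvSetUpToRev_mul_rev_iff])
      (isWEndo_mul_rev hh) (by rw [← mul_assoc]; exact hgh.2.resolve_left hI)
    rwa [hasInvSetUpToRev_mul_rev_iff] at this
  rcases hS g h hgh.1 hh hI with h0 | hS'
  · left
    rcases eq_one_or_eq_rev_of_invSet_eq_empty (isEndo_of_mul_right hgh.1 hh) h0 with rfl | rfl
    · rwa [mul_one] at hgh
    · rwa [hasInvSetUpToRev_mul_rev_iff] at hgh
  · exact Or.inr ⟨isEndo_of_mul_right hgh.1 hh, Or.inl hS'⟩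

lemma exists_mem_hasInvSetUpToRev {C : Set (Function.End (Fin n))}
    (hW : ∀ f ∈ Submonoid.closure C, IsWEndo f) {S : Set ℕ} (hS : IsRigid n S)
    (hne : S.Nonempty) {f : Function.End (Fin n)} (hf : f ∈ Submonoid.closure C)
    (hfS : HasInvSetUpToRev S f) : ∃ c ∈ C, HasInvSetUpToRev S c :=
  Submonoid.exists_mem_of_mem_closure (not_hasInvSetUpToRev_one hne)
    (fun _ _ _ hy hxy => hxy.of_mul hS (hW _ hy)) hf hfS

/-- `|i - t|` in truncated subtraction; the `min` is inactive for `t < n`. -/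
def fold (n t : ℕ) : Function.End (Fin n) :=
  fun x => ⟨min ((t - x) + (x - t)) (n - 1), by have := x.isLt; omega⟩

lemma natApply_fold {t i : ℕ} (hi : i < n) :
    natApply (fold n t) i = min ((t - i) + (i - t)) (n - 1) :=
  natApply_of_lt _ hi

lemma isEndo_fold {t : ℕ} (ht : t < n) : IsEndo (fold n t) := by
  rw [isEndo_iff]
  intro i hi
  rw [natApply_fold hi, natApply_fold (by omega)]
  omega

lemma invSet_fold {t : ℕ} (h1 : 1 ≤ t) (h2 : t + 1 < n) : InvSet (fold n t) = {t} := by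
  ext i
  rw [Set.mem_singleton_iff, mem_invSet]
  constructor
  · rintro ⟨-, hi, heq, -⟩
    rw [natApply_fold (by omega), natApply_fold hi] at heq
    omega
  · rintro rfl
    refine ⟨h1, h2, ?_, ?_⟩ <;>
      rw [natApply_fold (by omega), natApply_fold (by omega)] <;> omega

def zigzag (n t₁ t₂ : ℕ) : Function.End (Fin n) :=
  fun x => ⟨min (if x ≤ t₁ then x else if x ≤ t₂ then 2 * t₁ - x else x - 2 * (t₂ - t₁))
    (n - 1), by have := x.isLt; omega⟩

lemma natApply_zigzag {t₁ t₂ i : ℕ} (hi : i < n) :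
    natApply (zigzag n t₁ t₂) i =
      min (if i ≤ t₁ then i else if i ≤ t₂ then 2 * t₁ - i else i - 2 * (t₂ - t₁)) (n - 1) :=
  natApply_of_lt _ hi

lemma isEndo_zigzag {t₁ t₂ : ℕ} (h21 : t₂ ≤ 2 * t₁) :
    IsEndo (zigzag n t₁ t₂) := by
  rw [isEndo_iff]
  intro i hi
  rw [natApply_zigzag hi, natApply_zigzag (by omega)]
  split_ifs <;> omega

lemma invSet_zigzag {t₁ t₂ : ℕ} (h12 : t₁ < t₂) (h21 : t₂ ≤ 2 * t₁) (h2 : t₂ + 1 < n) :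
    InvSet (zigzag n t₁ t₂) = {t₁, t₂} := by
  ext i
  simp only [Set.mem_insert_iff, Set.mem_singleton_iff, mem_invSet]
  constructor
  · rintro ⟨-, hi, heq, hne⟩
    rw [natApply_zigzag (by omega), natApply_zigzag hi] at heq
    rw [natApply_zigzag hi, natApply_zigzag (by omega)] at hne
    split_ifs at heq hne <;> omega
  · rintro (rfl | rfl) <;> refine ⟨by omega, by omega, ?_, ?_⟩ <;>
      rw [natApply_zigzag (by omega), natApply_zigzag (by omega)] <;> split_ifs <;> omega

lemma card_le_ncard_of_hasInvSetUpToRev {ι : Type*} {C : Set (Function.End (Fin n))}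
    {I : Finset ι} {S : ι → Set ℕ} {k : ℕ}
    (hex : ∀ i ∈ I, ∃ c ∈ C, HasInvSetUpToRev (S i) c) (hcard : ∀ i ∈ I, (S i).ncard = k)
    (hinj : ∀ i ∈ I, ∀ j ∈ I, S j = S i ∨ S j = (fun x => n - 1 - x) '' S i → i = j) :
    I.card ≤ {f ∈ C | (InvSet f).ncard = k}.ncard := by
  have : Finite (Function.End (Fin n)) := inferInstanceAs (Finite (Fin n → Fin n))
  choose! c hcC hc using hex
  rw [← Set.ncard_coe_finset]
  refine Set.ncard_le_ncard_of_injOn c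
    (fun i hi => ⟨hcC i hi, (hc i hi).ncard_invSet.trans (hcard i hi)⟩) ?_
  intro i hi j hj hij
  have hi' := (hc i hi).invSet_eq_or_image_eq
  have hj' := (hc j hj).invSet_eq_or_image_eq
  rw [hij] at hi'
  rcases hi' with h | h <;> rcases hj' with h' | h'
  · exact hinj i hi j hj (Or.inl (h'.symm.trans h))
  · exact hinj i hi j hj (Or.inr (by rw [← h', h]))
  · exact (hinj j hj i hi (Or.inr (by rw [← h, h']))).symm
  · exact hinj i hi j hj (Or.inl (h'.symm.trans h))

variable {C : Set (Function.End (Fin n))}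

lemma div_two_le_ncard_invSet_eq_one (hE : ∀ f, IsEndo f → f ∈ Submonoid.closure C)
    (hW : ∀ f ∈ Submonoid.closure C, IsWEndo f) :
    (n - 1) / 2 ≤ {f ∈ C | (InvSet f).ncard = 1}.ncard := by
  calc (n - 1) / 2 = (Finset.Icc 1 ((n - 1) / 2)).card := by simp
    _ ≤ _ := by
      refine card_le_ncard_of_hasInvSetUpToRev (S := fun t => {t}) (fun t ht => ?_)
        (fun _ _ => Set.ncard_singleton _) fun t ht t' ht' h => ?_
      · rw [Finset.mem_Icc] at ht
        have hfold := isEndo_fold (n := n) (t := t) (by omega)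
        exact exists_mem_hasInvSetUpToRev hW (isRigid_singleton t) (Set.singleton_nonempty t)
          (hE _ hfold) ⟨hfold, Or.inl (invSet_fold ht.1 (by omega))⟩
      · simp only [Finset.mem_Icc] at ht ht'
        simp only [Set.image_singleton, Set.singleton_eq_singleton_iff] at h
        omega

lemma sum_le_ncard_invSet_eq_two (hE : ∀ f, IsEndo f → f ∈ Submonoid.closure C)
    (hW : ∀ f ∈ Submonoid.closure C, IsWEndo f) :
    (∑ j ∈ Finset.Icc 1 ((n - 3) / 3), (n - 3 * j - 1) / 2) ≤
      {f ∈ C | (InvSet f).ncard = 2}.ncard := by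
  -- `j` is the gap `t₂ - t₁` and `l = t₁`
  calc (∑ j ∈ Finset.Icc 1 ((n - 3) / 3), (n - 3 * j - 1) / 2)
      = ∑ j ∈ Finset.Icc 1 ((n - 3) / 3), (Finset.Icc (j + 1) ((n - 1 - j) / 2)).card := by
        refine Finset.sum_congr rfl fun j hj => ?_
        rw [Finset.mem_Icc] at hj
        rw [Nat.card_Icc]
        omega
    _ = ((Finset.Icc 1 ((n - 3) / 3)).sigma
          fun j => Finset.Icc (j + 1) ((n - 1 - j) / 2)).card :=
        (Finset.card_sigma _ _).symm
    _ ≤ _ := by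
      refine card_le_ncard_of_hasInvSetUpToRev (S := fun p => {p.2, p.2 + p.1})
        (fun p hp => ?_) (fun p hp => Set.ncard_pair (by simp at hp; omega))
        fun ⟨j, l⟩ hp ⟨j', l'⟩ hp' h => ?_
      · simp only [Finset.mem_sigma, Finset.mem_Icc] at hp
        have hzig := isEndo_zigzag (n := n) (t₁ := p.2) (t₂ := p.2 + p.1) (by omega)
        exact exists_mem_hasInvSetUpToRev hW (isRigid_pair (by omega) (by omega) (by omega))
          (Set.insert_nonempty _ _) (hE _ hzig)
          ⟨hzig, Or.inl (invSet_zigzag (by omega) (by omega) (by omega))⟩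
      · simp only [Finset.mem_sigma, Finset.mem_Icc] at hp hp'
        simp only [Set.image_pair, Set.pair_eq_pair_iff] at h
        obtain ⟨rfl, rfl⟩ : j = j' ∧ l = l' := by omega
        rfl

end PathEnd

open PathEnd in
/-- Any generating set of `End P_n` or of `wEnd P_n` contains at least `⌊(n-1)/2⌋`
transformations with exactly one inversion and at least
`∑_{j=1}^{⌊(n-3)/3⌋} ⌊(n-3j-1)/2⌋` transformations with exactly two inversions. -/
theorem gen_set_inversions (n : ℕ) (C : Set (Function.End (Fin n)))
    (hC : (Submonoid.closure C : Set (Function.End (Fin n))) = {f | IsEndo f} ∨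
          (Submonoid.closure C : Set (Function.End (Fin n))) = {f | IsWEndo f}) :
    (n - 1) / 2 ≤ {f ∈ C | (InvSet f).ncard = 1}.ncard ∧
    (∑ j ∈ Finset.Icc 1 ((n - 3) / 3), (n - 3 * j - 1) / 2) ≤
      {f ∈ C | (InvSet f).ncard = 2}.ncard := by
  obtain ⟨hE, hW⟩ : (∀ f, IsEndo f → f ∈ Submonoid.closure C) ∧
      ∀ f ∈ Submonoid.closure C, IsWEndo f := by
    simp only [← SetLike.mem_coe]
    rcases hC with h | h <;> rw [h]
    · exact ⟨fun _ => id, fun _ => isWEndo_of_isEndo⟩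
    · exact ⟨fun _ => isWEndo_of_isEndo, fun _ => id⟩
  exact ⟨div_two_le_ncard_invSet_eq_one hE hW, sum_le_ncard_invSet_eq_two hE hW⟩
end

section
/- Let C be a generating set of the monoid wEnd P_n. Then C contains at least ⌊n/2⌋ distinct transformations α ∈ wEnd P_n \ End P_n with inv(α) = 0. -/
/-!
For `j < n / 2`, let `K_j = edgeCollapseClass n j` be the set of maps whose kernel identifies
exactly the two ends of the edge `{j, j + 1}` of the path, or exactly those of its mirror image
`{n - 2 - j, n - 1 - j}`.
A weak endomorphism in `K_j` lies outside `End P_n`, and it has no inversions, because an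
inversion at `m` would identify `m - 1` and `m + 1`.

`K_j` is prime in `wEnd P_n`: if `g * h ∈ K_j` with `h ∈ wEnd P_n`, then `h` either identifies
the same edge, and then `h ∈ K_j`, or is injective. An injective weak endomorphism is the identity
or the reflection `k ↦ n - 1 - k`, so in that case `g ∈ K_j`. As `1 ∉ K_j`, every generating set
meets each `K_j`, and the sets `K_j` for `j < n / 2` are pairwise disjoint.
-/

open Function

theorem Submonoid.inter_nonempty_of_mem_closure {M : Type*} [Monoid M] {C S : Set M}
    (h1 : (1 : M) ∉ S) (hmul : ∀ x ∈ closure C, ∀ y ∈ closure C, x * y ∈ S → x ∈ S ∨ y ∈ S)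
    {x : M} (hx : x ∈ closure C) (hxS : x ∈ S) : (C ∩ S).Nonempty := by
  induction hx using closure_induction with
  | mem c hc => exact ⟨c, hc, hxS⟩
  | one => exact absurd hxS h1
  | mul x y hx hy ihx ihy => exact (hmul x hx y hy hxS).elim ihx ihy

section

variable {n : ℕ}

theorem IsWEndo.exists_eq_add_mul_of_injective {f : Function.End (Fin n)} (hf : IsWEndo f)
    (hinj : Injective f) (hn : 1 < n) :
    ∃ d : ℤ, (d = 1 ∨ d = -1) ∧ ∀ a : Fin n, ((f a : ℕ) : ℤ) = (f ⟨0, by omega⟩ : ℕ) + d * a := by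
  have hne : ∀ a b (ha : a < n) (hb : b < n), a ≠ b → ((f ⟨a, ha⟩ : ℕ) : ℤ) ≠ f ⟨b, hb⟩ :=
    fun a b _ _ hab h => hab (Fin.mk.inj (hinj (Fin.ext (by exact_mod_cast h))))
  obtain ⟨d, hd1, hd⟩ : ∃ d : ℤ, (d = 1 ∨ d = -1) ∧
      ((f ⟨0 + 1, hn⟩ : ℕ) : ℤ) = (f ⟨0, by omega⟩ : ℕ) + d := by
    have h0 := hf 0 hn
    have n0 := hne 0 (0 + 1) (by omega) hn (by omega)
    rw [abs_le] at h0
    exact ⟨_, by omega, (add_sub_cancel _ _).symm⟩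
  -- injectivity forbids both a zero step and a step back, so every step repeats the first one
  have hstep : ∀ k (hk : k + 1 < n), ((f ⟨k + 1, hk⟩ : ℕ) : ℤ) = (f ⟨k, by omega⟩ : ℕ) + d := by
    intro k
    induction k with
    | zero => exact fun _ => hd
    | succ k ih =>
      intro hk
      have h1 := hf (k + 1) hk
      have h0 := ih (by omega)
      have n1 := hne (k + 1) (k + 1 + 1) (by omega) hk (by omega)
      have n2 := hne k (k + 1 + 1) (by omega) hk (by omega)
      rw [abs_le] at h1
      omega
  refine ⟨d, hd1, fun ⟨k, hk⟩ => ?_⟩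
  induction k with
  | zero => simp
  | succ k ih => rw [hstep k hk, ih (by omega)]; push_cast; ring

theorem IsWEndo.eq_one_or_eq_rev_of_injective {f : Function.End (Fin n)} (hf : IsWEndo f)
    (hinj : Injective f) : f = 1 ∨ f = Fin.rev := by
  rcases Nat.lt_or_ge n 2 with hn | hn
  · have : Subsingleton (Fin n) := Fin.subsingleton_iff_le_one.2 (by omega)
    exact Or.inl (funext fun _ => Subsingleton.elim _ _)
  obtain ⟨d, hd, hf_eq⟩ := hf.exists_eq_add_mul_of_injective hinj hn
  have hlast := hf_eq ⟨n - 1, by omega⟩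
  dsimp only at hlast
  have hbound₀ := (f ⟨0, by omega⟩).isLt
  have hbound := (f ⟨n - 1, by omega⟩).isLt
  rcases hd with rfl | rfl
  · refine Or.inl (funext fun a => Fin.ext ?_)
    have := hf_eq a
    change (f a : ℕ) = a
    omega
  · refine Or.inr (funext fun a => Fin.ext ?_)
    have := hf_eq a
    rw [Fin.val_rev]
    omega

def CollapsesOnlyEdge (f : Function.End (Fin n)) (i : ℕ) : Prop :=
  i + 1 < n ∧ ∀ a b : Fin n, a < b → (f a = f b ↔ (a : ℕ) = i ∧ (b : ℕ) = i + 1)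

namespace CollapsesOnlyEdge

variable {f g h : Function.End (Fin n)} {i i' : ℕ}

theorem apply_eq (hf : CollapsesOnlyEdge f i) :
    f ⟨i, Nat.lt_of_succ_lt hf.1⟩ = f ⟨i + 1, hf.1⟩ :=
  (hf.2 _ _ (Fin.mk_lt_mk.2 i.lt_succ_self)).2 ⟨rfl, rfl⟩

theorem unique (hi : CollapsesOnlyEdge f i) (hi' : CollapsesOnlyEdge f i') : i = i' :=
  ((hi.2 _ _ (Fin.mk_lt_mk.2 i'.lt_succ_self)).1 hi'.apply_eq).1.symm

theorem not_isEndo (hf : CollapsesOnlyEdge f i) : ¬ IsEndo f := by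
  intro hE
  simpa [hf.apply_eq] using hE i hf.1

theorem invSet_eq_empty (hf : CollapsesOnlyEdge f i) : InvSet f = ∅ := by
  refine Set.eq_empty_of_forall_notMem fun m ⟨h1, h2, hm, _⟩ => ?_
  have : m - 1 = i ∧ m + 1 = i + 1 := (hf.2 _ _ (Fin.mk_lt_mk.2 (by omega))).1 hm
  omega

theorem right_or_injective_of_mul (hgh : CollapsesOnlyEdge (g * h) i) :
    CollapsesOnlyEdge h i ∨ Injective h := by
  have hi : i < n := Nat.lt_of_succ_lt hgh.1
  have hker : ∀ a b, a < b → h a = h b → (a : ℕ) = i ∧ (b : ℕ) = i + 1 :=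
    fun a b hab he => (hgh.2 a b hab).1 (congrArg g he)
  by_cases hplat : h ⟨i, hi⟩ = h ⟨i + 1, hgh.1⟩
  · refine Or.inl ⟨hgh.1, fun a b hab => ⟨hker a b hab, fun ⟨ha, hb⟩ => ?_⟩⟩
    rwa [show a = ⟨i, hi⟩ from Fin.ext ha, show b = ⟨i + 1, hgh.1⟩ from Fin.ext hb]
  · have hlt : ∀ a b, a < b → h a ≠ h b := fun a b hab he => by
      obtain ⟨ha, hb⟩ := hker a b hab he
      rw [show a = ⟨i, hi⟩ from Fin.ext ha, show b = ⟨i + 1, hgh.1⟩ from Fin.ext hb] at he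
      exact hplat he
    refine Or.inr fun a b he => by_contra fun hne => ?_
    rcases lt_or_gt_of_ne hne with hab | hab
    exacts [hlt a b hab he, hlt b a hab he.symm]

theorem of_mul_rev (hg : CollapsesOnlyEdge (g * show Function.End (Fin n) from Fin.rev) i)
    (hii' : i + i' + 2 = n) : CollapsesOnlyEdge g i' := by
  refine ⟨by omega, fun a b hab => ?_⟩
  have key := hg.2 b.rev a.rev (Fin.rev_lt_rev.2 hab)
  change g b.rev.rev = g a.rev.rev ↔ _ at key
  simp only [Fin.rev_rev, Fin.val_rev] at key
  rw [eq_comm, key]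
  omega

end CollapsesOnlyEdge

theorem not_collapsesOnlyEdge_one {i : ℕ} : ¬ CollapsesOnlyEdge (1 : Function.End (Fin n)) i :=
  fun hf => Nat.succ_ne_self i (congrArg Fin.val hf.apply_eq : i = i + 1).symm

def edgeCollapseClass (n j : ℕ) : Set (Function.End (Fin n)) :=
  {f | ∃ i, (i = j ∨ i + j + 2 = n) ∧ CollapsesOnlyEdge f i}

section edgeCollapseClass

variable {j : ℕ}

theorem one_notMem_edgeCollapseClass : (1 : Function.End (Fin n)) ∉ edgeCollapseClass n j :=
  fun ⟨_, _, hi⟩ => not_collapsesOnlyEdge_one hi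

theorem mem_edgeCollapseClass_or_of_mul {g h : Function.End (Fin n)} (hh : IsWEndo h)
    (hgh : g * h ∈ edgeCollapseClass n j) :
    g ∈ edgeCollapseClass n j ∨ h ∈ edgeCollapseClass n j := by
  obtain ⟨i, hij, hi⟩ := hgh
  rcases hi.right_or_injective_of_mul with hi' | hinj
  · exact Or.inr ⟨i, hij, hi'⟩
  have hin := hi.1
  rcases hh.eq_one_or_eq_rev_of_injective hinj with rfl | rfl
  · exact Or.inl ⟨i, hij, hi⟩
  · exact Or.inl ⟨n - 2 - i, by omega, hi.of_mul_rev (by omega)⟩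

theorem eq_of_mem_edgeCollapseClass {f : Function.End (Fin n)} {j' : ℕ} (hj : j < n / 2)
    (hj' : j' < n / 2) (hf : f ∈ edgeCollapseClass n j) (hf' : f ∈ edgeCollapseClass n j') :
    j = j' := by
  obtain ⟨i, hij, hi⟩ := hf
  obtain ⟨i', hij', hi'⟩ := hf'
  have := hi.unique hi'
  omega

end edgeCollapseClass

def collapseEdge (n j : ℕ) : Function.End (Fin n) :=
  fun k => ⟨if (k : ℕ) ≤ j then k else k - 1, by split_ifs <;> omega⟩

theorem isWEndo_collapseEdge {j : ℕ} : IsWEndo (collapseEdge n j) := by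
  intro k hk
  simp only [collapseEdge, abs_le]
  split_ifs <;> constructor <;> push_cast <;> omega

theorem collapsesOnlyEdge_collapseEdge {j : ℕ} (hj : j + 1 < n) :
    CollapsesOnlyEdge (collapseEdge n j) j := by
  refine ⟨hj, fun a b hab => ?_⟩
  simp only [collapseEdge, Fin.mk.injEq]
  rw [Fin.lt_def] at hab
  split_ifs <;> omega

end

/-- Any generating set of `wEnd P_n` contains at least `⌊n/2⌋` transformations lying in
`wEnd P_n \ End P_n` and having no inversions. -/
theorem gen_set_wEnd_no_inversions (n : ℕ) (C : Set (Function.End (Fin n)))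
    (hC : (Submonoid.closure C : Set (Function.End (Fin n))) = {f | IsWEndo f}) :
    n / 2 ≤ {f ∈ C | IsWEndo f ∧ ¬ IsEndo f ∧ (InvSet f).ncard = 0}.ncard := by
  have hcl : ∀ {f}, f ∈ Submonoid.closure C ↔ IsWEndo f := Set.ext_iff.1 hC _
  have hmeet (j : Fin (n / 2)) : (C ∩ edgeCollapseClass n j).Nonempty :=
    Submonoid.inter_nonempty_of_mem_closure one_notMem_edgeCollapseClass
      (fun _ _ _ hy => mem_edgeCollapseClass_or_of_mul (hcl.1 hy))
      (hcl.2 isWEndo_collapseEdge) ⟨j, Or.inl rfl, collapsesOnlyEdge_collapseEdge (by omega)⟩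
  choose φ hφ using hmeet
  have hφ_inj : Injective φ := fun j j' h =>
    Fin.ext (eq_of_mem_edgeCollapseClass j.isLt j'.isLt (hφ j).2 (h ▸ (hφ j').2))
  have : Finite (Function.End (Fin n)) := inferInstanceAs (Finite (Fin n → Fin n))
  calc n / 2 = (Set.range φ).ncard := by simp [Set.ncard_range_of_injective hφ_inj]
    _ ≤ _ := by
      refine Set.ncard_le_ncard (Set.range_subset_iff.2 fun j => ?_) (Set.toFinite _)
      obtain ⟨i, -, hi⟩ := (hφ j).2
      exact ⟨(hφ j).1, hcl.1 (Submonoid.subset_closure (hφ j).1), hi.not_isEndo,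
        by rw [hi.invSet_eq_empty, Set.ncard_empty]⟩
end
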